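/- arXiv:1501.04707 — 7 statements merged into one kernel-verified Lean document; each statement's English description precedes it below -/
import Mathlib

section
/- Let f(t) = Σ_{k=1}^M a_k(t)cos θ_k(t) + r(t) on [0,1], and let (a, θ) be another pair with a cos θ ∈ L²[0,1]. Fix l ∈ {1,…,M} and define the coherences μ_{k,l} = |⟨a_l cos θ_l, a_k cos θ_k⟩| / (‖a_l cos θ_l‖_{L²} ‖a_k cos θ_k‖_{L²}) and μ_{k,l,α} = |⟨a cos θ, a_k cos θ_k⟩| / (‖a cos θ‖_{L²} ‖a_k cos θ_k‖_{L²}), and set δ₁ = Σ_{k≠l} μ_{k,l} ‖a_k cos θ_k‖_{L²} / ‖a_l cos θ_l‖_{L²} and δ₂ = Σ_{k≠l} μ_{k,l,α} ‖a_k cos θ_k‖_{L²} / ‖a_l cos θ_l‖_{L²} + ‖r‖_{L²} / ‖a_l cos θ_l‖_{L²}. If p(a, θ) ≤ p(a_l, θ_l), where p(a, θ) = ‖f − a cos θ‖²_{L²[0,1]}, then ‖a cos θ − a_l cos θ_l‖_{L²} / ‖a_l cos θ_l‖_{L²} ≤ δ₂ + √(δ₂² + 2(δ₁ + δ₂)).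 -/
open Real MeasureTheory intervalIntegral

noncomputable section

/-- The class `U_ε`: pairs `(a, θ)` with `a ∈ C¹`, `θ ∈ C²`, `a > 0`, `θ' > 0`,
`inf θ' > 0`, `|a'/θ'| ≤ ε`, `|θ''/(θ')²| ≤ ε`, and `sup θ' / inf θ' ≤ M'`. -/
def UEps (ε M' : ℝ) (a θ : ℝ → ℝ) : Prop :=
  ContDiff ℝ 1 a ∧ ContDiff ℝ 2 θ ∧
  (∀ t, 0 < a t) ∧ (∀ t, 0 < deriv θ t) ∧
  (∃ c > 0, ∀ t : ℝ, c ≤ deriv θ t) ∧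
  (∀ t, |deriv a t / deriv θ t| ≤ ε) ∧
  (∀ t, |deriv (deriv θ) t / (deriv θ t) ^ 2| ≤ ε) ∧
  (∀ s t : ℝ, deriv θ s ≤ M' * deriv θ t)

/-- The `L²[0,1]` inner product `⟨f, g⟩ = ∫_0^1 f g`. -/
def l2inner (f g : ℝ → ℝ) : ℝ := ∫ t in (0:ℝ)..1, f t * g t

/-- The `L²[0,1]` norm. -/
def l2norm (f : ℝ → ℝ) : ℝ := Real.sqrt (l2inner f f)

private lemma l2_integrable {u v : ℝ → ℝ} (hu : Continuous u) (hv : Continuous v) :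
    IntervalIntegrable (fun t => u t * v t) MeasureTheory.volume 0 1 :=
  (hu.mul hv).intervalIntegrable 0 1

private lemma l2inner_self_nonneg (u : ℝ → ℝ) : 0 ≤ l2inner u u :=
  intervalIntegral.integral_nonneg zero_le_one fun t _ => mul_self_nonneg _

private lemma l2norm_nonneg' (u : ℝ → ℝ) : 0 ≤ l2norm u := Real.sqrt_nonneg _

private lemma l2norm_sq' (u : ℝ → ℝ) : l2norm u ^ 2 = l2inner u u :=
  Real.sq_sqrt (l2inner_self_nonneg u)

private lemma l2inner_comm (u v : ℝ → ℝ) : l2inner u v = l2inner v u := by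
  unfold l2inner; simp_rw [mul_comm]

private lemma l2inner_expand (x : ℝ) {u v : ℝ → ℝ} (hu : Continuous u) (hv : Continuous v) :
    l2inner (fun t => x * v t - u t) (fun t => x * v t - u t)
      = l2inner v v * (x * x) + (-(2 * l2inner u v)) * x + l2inner u u := by
  unfold l2inner
  have h : ∀ t, (x * v t - u t) * (x * v t - u t)
      = ((x * x) * (v t * v t) - (2 * x) * (u t * v t)) + u t * u t := fun t => by ring
  simp_rw [h]
  rw [intervalIntegral.integral_add
      (((l2_integrable hv hv).const_mul _).sub ((l2_integrable hu hv).const_mul _))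
      (l2_integrable hu hu),
    intervalIntegral.integral_sub ((l2_integrable hv hv).const_mul _)
      ((l2_integrable hu hv).const_mul _),
    intervalIntegral.integral_const_mul, intervalIntegral.integral_const_mul]
  ring

private lemma l2_cauchy {u v : ℝ → ℝ} (hu : Continuous u) (hv : Continuous v) :
    |l2inner u v| ≤ l2norm u * l2norm v := by
  have hd : discrim (l2inner v v) (-(2 * l2inner u v)) (l2inner u u) ≤ 0 := by
    apply discrim_le_zero
    intro x
    rw [← l2inner_expand x hu hv]
    exact l2inner_self_nonneg _
  rw [discrim] at hd
  have h2 : l2inner u v ^ 2 ≤ l2inner u u * l2inner v v := by nlinarith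
  calc |l2inner u v| = Real.sqrt (l2inner u v ^ 2) := (Real.sqrt_sq_eq_abs _).symm
    _ ≤ Real.sqrt (l2inner u u * l2inner v v) := Real.sqrt_le_sqrt h2
    _ = l2norm u * l2norm v := Real.sqrt_mul (l2inner_self_nonneg u) _

private lemma l2inner_sub_sub {u v : ℝ → ℝ} (hu : Continuous u) (hv : Continuous v) :
    l2inner (fun t => u t - v t) (fun t => u t - v t)
      = l2inner u u - 2 * l2inner u v + l2inner v v := by
  unfold l2inner
  have h : ∀ t, (u t - v t) * (u t - v t)
      = (u t * u t - 2 * (u t * v t)) + v t * v t := fun t => by ring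
  simp_rw [h]
  rw [intervalIntegral.integral_add
      ((l2_integrable hu hu).sub ((l2_integrable hu hv).const_mul _))
      (l2_integrable hv hv),
    intervalIntegral.integral_sub (l2_integrable hu hu) ((l2_integrable hu hv).const_mul _),
    intervalIntegral.integral_const_mul]

private lemma l2inner_sub_right {u v w : ℝ → ℝ} (hu : Continuous u) (hv : Continuous v)
    (hw : Continuous w) :
    l2inner u (fun t => v t - w t) = l2inner u v - l2inner u w := by
  unfold l2inner
  simp_rw [mul_sub]
  exact intervalIntegral.integral_sub (l2_integrable hu hv) (l2_integrable hu hw)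

private lemma l2inner_sum_add_left {s : Finset ℕ} {F : ℕ → ℝ → ℝ} {r v : ℝ → ℝ}
    (hF : ∀ k ∈ s, Continuous (F k)) (hr : Continuous r) (hv : Continuous v) :
    l2inner (fun t => (∑ k ∈ s, F k t) + r t) v
      = (∑ k ∈ s, l2inner (F k) v) + l2inner r v := by
  unfold l2inner
  have h : ∀ t, ((∑ k ∈ s, F k t) + r t) * v t
      = (∑ k ∈ s, F k t * v t) + r t * v t := by
    intro t; rw [add_mul, Finset.sum_mul]
  simp_rw [h]
  rw [intervalIntegral.integral_add (f := fun t => ∑ k ∈ s, F k t * v t) (g := fun t => r t * v t)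
      ((continuous_finset_sum s fun k hk => (hF k hk).mul hv).intervalIntegrable 0 1)
      (l2_integrable hr hv),
    intervalIntegral.integral_finset_sum fun k hk => l2_integrable (hF k hk) hv]

private lemma abs_l2inner_eq {u v : ℝ → ℝ} (hu : Continuous u) (hv : Continuous v) :
    |l2inner u v| = |l2inner u v| / (l2norm u * l2norm v) * (l2norm u * l2norm v) := by
  rcases eq_or_ne (l2norm u * l2norm v) 0 with h | h
  · rw [h, mul_zero]
    exact le_antisymm ((l2_cauchy hu hv).trans h.le) (abs_nonneg _)
  · exact (div_mul_cancel₀ _ h).symm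

/-- Let `f = Σ_{k=1}^M a_k cos θ_k + r` on `[0,1]` and let
`(a, θ)` be another pair (all functions continuous, so all products are in
`L²[0,1]`). With the coherences `μ_{k,l}`, `μ_{k,l,α}` and the quantities `δ₁`, `δ₂`
defined as in the paper, if `p(a, θ) ≤ p(a_l, θ_l)` then
`‖a cos θ − a_l cos θ_l‖ / ‖a_l cos θ_l‖ ≤ δ₂ + √(δ₂² + 2(δ₁ + δ₂))`. -/
theorem matching_pursuit_step_bound (M l : ℕ) (hl : l ∈ Finset.Icc 1 M)
    (f r a θ : ℝ → ℝ) (aC θC : ℕ → ℝ → ℝ)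
    (hconta : Continuous a) (hcontθ : Continuous θ)
    (hcontr : Continuous r)
    (hcontk : ∀ k ∈ Finset.Icc 1 M, Continuous (aC k) ∧ Continuous (θC k))
    (hf : ∀ t ∈ Set.Icc (0:ℝ) 1,
      f t = (∑ k ∈ Finset.Icc 1 M, aC k t * Real.cos (θC k t)) + r t) :
    let comp : ℕ → ℝ → ℝ := fun k t => aC k t * Real.cos (θC k t)
    let g : ℝ → ℝ := fun t => a t * Real.cos (θ t)
    let μ : ℕ → ℝ := fun k =>
      |l2inner (comp l) (comp k)| / (l2norm (comp l) * l2norm (comp k))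
    let μα : ℕ → ℝ := fun k =>
      |l2inner g (comp k)| / (l2norm g * l2norm (comp k))
    let δ₁ : ℝ := ∑ k ∈ (Finset.Icc 1 M).erase l, μ k * (l2norm (comp k) / l2norm (comp l))
    let δ₂ : ℝ := (∑ k ∈ (Finset.Icc 1 M).erase l,
        μα k * (l2norm (comp k) / l2norm (comp l))) + l2norm r / l2norm (comp l)
    (l2norm (fun t => f t - g t)) ^ 2 ≤ (l2norm (fun t => f t - comp l t)) ^ 2 →
      l2norm (fun t => g t - comp l t) / l2norm (comp l) ≤
        δ₂ + Real.sqrt (δ₂ ^ 2 + 2 * (δ₁ + δ₂)) := by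
  intro comp g μ μα δ₁ δ₂ hp
  have hδ₁def : δ₁ = ∑ k ∈ (Finset.Icc 1 M).erase l,
      μ k * (l2norm (comp k) / l2norm (comp l)) := rfl
  have hδ₂def : δ₂ = (∑ k ∈ (Finset.Icc 1 M).erase l,
      μα k * (l2norm (comp k) / l2norm (comp l))) + l2norm r / l2norm (comp l) := rfl
  have hμdef : ∀ k, μ k = |l2inner (comp l) (comp k)|
      / (l2norm (comp l) * l2norm (comp k)) := fun _ => rfl
  have hμαdef : ∀ k, μα k = |l2inner g (comp k)|
      / (l2norm g * l2norm (comp k)) := fun _ => rfl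
  -- continuity
  have hcomp : ∀ k ∈ Finset.Icc 1 M, Continuous (comp k) := fun k hk =>
    (hcontk k hk).1.mul (Real.continuous_cos.comp (hcontk k hk).2)
  have hg : Continuous g := hconta.mul (Real.continuous_cos.comp hcontθ)
  have hcl : Continuous (comp l) := hcomp l hl
  have hμ_nonneg : ∀ k, 0 ≤ μ k := fun k => by
    rw [hμdef]
    exact div_nonneg (abs_nonneg _) (mul_nonneg (l2norm_nonneg' _) (l2norm_nonneg' _))
  have hμα_nonneg : ∀ k, 0 ≤ μα k := fun k => by
    rw [hμαdef]
    exact div_nonneg (abs_nonneg _) (mul_nonneg (l2norm_nonneg' _) (l2norm_nonneg' _))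
  set N := l2norm (comp l) with hNdef
  have hN0 : 0 ≤ N := l2norm_nonneg' _
  rcases eq_or_lt_of_le hN0 with h0 | hNpos
  · -- degenerate case : N = 0
    have hδ₂0 : δ₂ = 0 := by
      rw [hδ₂def, ← h0]
      simp
    have hδ₁0 : δ₁ = 0 := by
      rw [hδ₁def]
      apply Finset.sum_eq_zero
      intro k _
      rw [← h0, div_zero, mul_zero]
    rw [← h0, div_zero, hδ₁0, hδ₂0]
    simp
  · -- main case
    set T := (Finset.Icc 1 M).erase l with hT
    set e : ℝ → ℝ := fun t => g t - comp l t with he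
    have hce : Continuous e := hg.sub hcl
    set F : ℝ → ℝ := fun t => (∑ k ∈ Finset.Icc 1 M, aC k t * Real.cos (θC k t)) + r t
      with hF
    have hcF : Continuous F := by
      rw [hF]
      exact (continuous_finset_sum _ fun k hk =>
        (hcontk k hk).1.mul (Real.continuous_cos.comp (hcontk k hk).2)).add hcontr
    -- replace f by F in hp
    have hcongr : ∀ h : ℝ → ℝ, l2norm (fun t => f t - h t) = l2norm (fun t => F t - h t) := by
      intro h
      unfold l2norm l2inner
      congr 1
      apply intervalIntegral.integral_congr
      intro t ht
      rw [Set.uIcc_of_le (by norm_num : (0:ℝ) ≤ 1)] at ht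
      show (f t - h t) * (f t - h t) = (F t - h t) * (F t - h t)
      rw [hf t ht]
    rw [hcongr g, hcongr (comp l)] at hp
    rw [l2norm_sq', l2norm_sq', l2inner_sub_sub hcF hg, l2inner_sub_sub hcF hcl] at hp
    -- decomposition of ⟨F, u⟩
    have hFdec : ∀ u : ℝ → ℝ, Continuous u →
        l2inner F u = l2inner (comp l) u + ((∑ k ∈ T, l2inner (comp k) u) + l2inner r u) := by
      intro u hu
      have h0 : l2inner F u = l2inner (fun t => (∑ k ∈ Finset.Icc 1 M, comp k t) + r t) u := rfl
      rw [h0, l2inner_sum_add_left hcomp hcontr hu]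
      have hsplit : (∑ k ∈ T, l2inner (comp k) u) + l2inner (comp l) u
          = ∑ k ∈ Finset.Icc 1 M, l2inner (comp k) u := Finset.sum_erase_add _ _ hl
      linarith [hsplit]
    -- energy expansion of e
    have heexp : l2inner e e = l2inner g g - 2 * l2inner g (comp l) + l2inner (comp l) (comp l) :=
      l2inner_sub_sub hg hcl
    -- key inequality
    have key1 : l2inner e e ≤ 2 * ((∑ k ∈ T, (l2inner (comp k) g - l2inner (comp k) (comp l)))
        + (l2inner r g - l2inner r (comp l))) := by
      have h1 := hFdec g hg
      have h2 := hFdec (comp l) hcl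
      have hsum : (∑ k ∈ T, (l2inner (comp k) g - l2inner (comp k) (comp l)))
          = (∑ k ∈ T, l2inner (comp k) g) - ∑ k ∈ T, l2inner (comp k) (comp l) :=
        Finset.sum_sub_distrib _ _
      have hc : l2inner g (comp l) = l2inner (comp l) g := l2inner_comm _ _
      linarith [hp, heexp, h1, h2, hsum, hc]
    -- bounds
    set D : ℝ := ∑ k ∈ T, μα k * l2norm (comp k) with hD
    set E : ℝ := ∑ k ∈ T, μ k * l2norm (comp k) with hE
    have hD0 : 0 ≤ D := Finset.sum_nonneg fun k _ =>
      mul_nonneg (hμα_nonneg k) (l2norm_nonneg' _)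
    have hE0 : 0 ≤ E := Finset.sum_nonneg fun k _ =>
      mul_nonneg (hμ_nonneg k) (l2norm_nonneg' _)
    have hr0 : 0 ≤ l2norm r := l2norm_nonneg' _
    have hterm : ∀ k ∈ T, l2inner (comp k) g - l2inner (comp k) (comp l)
        ≤ μα k * l2norm (comp k) * l2norm g + μ k * l2norm (comp k) * N := by
      intro k hk
      have hkS : k ∈ Finset.Icc 1 M := Finset.mem_of_mem_erase hk
      have hck : Continuous (comp k) := hcomp k hkS
      have b1 : l2inner (comp k) g ≤ μα k * l2norm (comp k) * l2norm g := by
        have := abs_l2inner_eq hg hck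
        calc l2inner (comp k) g ≤ |l2inner (comp k) g| := le_abs_self _
          _ = |l2inner g (comp k)| := by rw [l2inner_comm]
          _ = μα k * (l2norm g * l2norm (comp k)) := by rw [hμαdef]; linarith [this]
          _ = μα k * l2norm (comp k) * l2norm g := by ring
      have b2 : -(l2inner (comp k) (comp l)) ≤ μ k * l2norm (comp k) * N := by
        have heq := abs_l2inner_eq hcl hck
        calc -(l2inner (comp k) (comp l)) ≤ |l2inner (comp k) (comp l)| := neg_le_abs _
          _ = |l2inner (comp l) (comp k)| := by rw [l2inner_comm]
          _ = μ k * (N * l2norm (comp k)) := by rw [hμdef]; linarith [heq]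
          _ = μ k * l2norm (comp k) * N := by ring
      linarith
    have hsumbound : (∑ k ∈ T, (l2inner (comp k) g - l2inner (comp k) (comp l)))
        ≤ D * l2norm g + E * N := by
      calc (∑ k ∈ T, (l2inner (comp k) g - l2inner (comp k) (comp l)))
          ≤ ∑ k ∈ T, (μα k * l2norm (comp k) * l2norm g + μ k * l2norm (comp k) * N) :=
            Finset.sum_le_sum hterm
        _ = D * l2norm g + E * N := by
            rw [Finset.sum_add_distrib, hD, hE, Finset.sum_mul, Finset.sum_mul]
    have hrbound : l2inner r g - l2inner r (comp l) ≤ l2norm r * l2norm e := by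
      have h1 : l2inner r g - l2inner r (comp l) = l2inner r e := by
        rw [he, l2inner_sub_right hcontr hg hcl]
      rw [h1]
      exact (le_abs_self _).trans (l2_cauchy hcontr hce)
    -- triangle : ‖g‖ ≤ ‖e‖ + N
    have htri : l2norm g ≤ l2norm e + N := by
      have hgc : l2inner g (comp l) ≤ l2norm g * N :=
        (le_abs_self _).trans (l2_cauchy hg hcl)
      have h1 : l2norm g ^ 2 = l2inner g g := l2norm_sq' g
      have h2 : l2norm e ^ 2 = l2inner e e := l2norm_sq' e
      have h3 : N ^ 2 = l2inner (comp l) (comp l) := l2norm_sq' _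
      have hge : 0 ≤ l2norm g := l2norm_nonneg' _
      have hee : 0 ≤ l2norm e := l2norm_nonneg' _
      nlinarith [heexp, sq_nonneg (l2norm g - N - l2norm e), sq_nonneg (l2norm g - N + l2norm e)]
    have hee : 0 ≤ l2norm e := l2norm_nonneg' _
    -- the quadratic inequality in unnormalized form
    have key2 : l2norm e ^ 2
        ≤ 2 * (D + l2norm r) * l2norm e + 2 * ((D + l2norm r) + E) * N := by
      have h2 : l2norm e ^ 2 = l2inner e e := l2norm_sq' e
      linarith [key1, hsumbound, hrbound, h2,
        mul_le_mul_of_nonneg_left htri hD0, mul_nonneg hr0 hN0]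
    -- convert δ's
    have hδ₂eq : δ₂ = (D + l2norm r) / N := by
      rw [hδ₂def, add_div, hD, Finset.sum_div]
      congr 1
      exact Finset.sum_congr rfl fun k _ => (mul_div_assoc _ _ _).symm
    have hδ₁eq : δ₁ = E / N := by
      rw [hδ₁def, hE, Finset.sum_div]
      exact Finset.sum_congr rfl fun k _ => (mul_div_assoc _ _ _).symm
    have hδ₂N : δ₂ * N = D + l2norm r := by
      rw [hδ₂eq, div_mul_cancel₀ _ (ne_of_gt hNpos)]
    have hδ₁N : δ₁ * N = E := by
      rw [hδ₁eq, div_mul_cancel₀ _ (ne_of_gt hNpos)]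
    have hδ₂0 : 0 ≤ δ₂ := hδ₂eq ▸ div_nonneg (add_nonneg hD0 hr0) hN0
    have hδ₁0 : 0 ≤ δ₁ := hδ₁eq ▸ div_nonneg hE0 hN0
    -- normalized quadratic inequality
    set X : ℝ := l2norm e / N with hX
    have hXN : X * N = l2norm e := div_mul_cancel₀ _ (ne_of_gt hNpos)
    have hX0 : 0 ≤ X := div_nonneg hee hN0
    rw [← hXN, ← hδ₂N, ← hδ₁N] at key2
    clear_value X E D N δ₁ δ₂
    clear hp key1 hsumbound hrbound htri heexp hterm hFdec hcongr hδ₂eq hδ₁eq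
      hδ₂N hδ₁N hXN hδ₁def hδ₂def hμ_nonneg hμα_nonneg hμdef hμαdef hf hcontk
      hcomp hg hcl hce hcF hE0 hee hD0 hr0 hNdef hX hD hE he hF hT
    have keyX : X ^ 2 ≤ 2 * δ₂ * X + 2 * (δ₁ + δ₂) := by
      have hN2 : (0:ℝ) < N ^ 2 := by positivity
      have h3 : X ^ 2 * N ^ 2 ≤ (2 * δ₂ * X + 2 * (δ₁ + δ₂)) * N ^ 2 := by
        nlinarith [key2]
      exact le_of_mul_le_mul_right (by linarith [h3]) hN2
    -- conclude
    have hq : 0 ≤ δ₂ ^ 2 + 2 * (δ₁ + δ₂) := by positivity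
    set s : ℝ := Real.sqrt (δ₂ ^ 2 + 2 * (δ₁ + δ₂)) with hsdef
    have hs : s ^ 2 = δ₂ ^ 2 + 2 * (δ₁ + δ₂) := Real.sq_sqrt hq
    have hs0 : 0 ≤ s := Real.sqrt_nonneg _
    have h1 : (X - δ₂) ^ 2 ≤ s ^ 2 := by nlinarith [keyX, hs]
    have h2 : |X - δ₂| ≤ s := by
      rw [← Real.sqrt_sq_eq_abs]
      calc Real.sqrt ((X - δ₂) ^ 2) ≤ Real.sqrt (s ^ 2) := Real.sqrt_le_sqrt h1
        _ = s := Real.sqrt_sq hs0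
    linarith [le_abs_self (X - δ₂), h2]
end
end

section
/- Let ε ∈ (0,1), n a positive integer, c ∈ ℝ, and let g be a positive, continuous, and piecewise C¹ function on [c, c + 2nπ] with |g'(t)/g(t)| < ε for all t in that interval (wherever g' is defined). Then |∫_c^{c+2nπ} g(t) cos t dt| < 2π ε ∫_c^{c+2nπ} g(t) dt. In fact the sharper bound |∫_c^{c+2nπ} g(t) cos t dt| ≤ 4ε ∫_c^{c+2nπ} g(t) dt holds. -/
open Real MeasureTheory intervalIntegral

/-- Let `ε ∈ (0,1)`, `n` a positive integer, and `g` a positive,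
continuous, piecewise `C¹` function on `[c, c + 2nπ]` (differentiable with derivative
`g'` outside a finite set `S`) with `|g'(t)/g(t)| < ε` wherever the derivative exists.
Then `|∫_c^{c+2nπ} g(t) cos t dt| < 2πε ∫_c^{c+2nπ} g(t) dt`, and in fact the sharper
bound `|∫_c^{c+2nπ} g(t) cos t dt| ≤ 4ε ∫_c^{c+2nπ} g(t) dt` holds. -/
theorem oscillatory_integral_bound (ε c : ℝ) (n : ℕ) (g g' : ℝ → ℝ) (S : Finset ℝ)
    (hε : ε ∈ Set.Ioo (0:ℝ) 1) (hn : 0 < n)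
    (hgpos : ∀ t ∈ Set.Icc c (c + 2 * (n:ℝ) * π), 0 < g t)
    (hgcont : ContinuousOn g (Set.Icc c (c + 2 * (n:ℝ) * π)))
    (hderiv : ∀ t ∈ Set.Icc c (c + 2 * (n:ℝ) * π) \ (S : Set ℝ), HasDerivAt g (g' t) t)
    (hratio : ∀ t ∈ Set.Icc c (c + 2 * (n:ℝ) * π) \ (S : Set ℝ), |g' t / g t| < ε) :
    |∫ t in c..(c + 2 * (n:ℝ) * π), g t * Real.cos t| <
        2 * π * ε * ∫ t in c..(c + 2 * (n:ℝ) * π), g t ∧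
      |∫ t in c..(c + 2 * (n:ℝ) * π), g t * Real.cos t| ≤
        4 * ε * ∫ t in c..(c + 2 * (n:ℝ) * π), g t := by
  obtain ⟨hε0, hε1⟩ := hε
  set b := c + 2 * (n:ℝ) * π with hb
  have hcb : c < b := by
    have : (0:ℝ) < 2 * (n:ℝ) * π := by positivity
    linarith
  have hab : c ≤ b := hcb.le
  set I : Set ℝ := Set.Icc c b with hI
  -- a.e. bound |g'| ≤ ε * g on I
  have hbound : ∀ t ∈ I \ (S : Set ℝ), |g' t| ≤ ε * g t := by
    intro t ht
    have hg := hgpos t ht.1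
    have h1 := hratio t ht
    have : |g' t| / g t = |g' t / g t| := by
      rw [abs_div, abs_of_pos hg]
    have h2 : |g' t| / g t < ε := by rw [this]; exact h1
    have := (div_lt_iff₀ hg).mp h2
    linarith
  have hSnull : (volume : Measure ℝ) (S : Set ℝ) = 0 := S.finite_toSet.measure_zero _
  have hnotS : ∀ᵐ t ∂(volume.restrict I), t ∉ (S : Set ℝ) := by
    refine (ae_restrict_of_ae ?_)
    exact (measure_eq_zero_iff_ae_notMem.mp hSnull)
  have hmemI : ∀ᵐ t ∂(volume.restrict I), t ∈ I :=
    ae_restrict_mem measurableSet_Icc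
  -- g' is a.e. equal to deriv g on I
  have h_ae_eq : g' =ᵐ[volume.restrict I] deriv g := by
    filter_upwards [hnotS, hmemI] with t htS htI
    exact ((hderiv t ⟨htI, htS⟩).deriv).symm
  have hg'_aesm : AEStronglyMeasurable g' (volume.restrict I) :=
    ((measurable_deriv g).aestronglyMeasurable).congr h_ae_eq.symm
  -- majorant ε * g is integrable on I
  have hmaj : IntegrableOn (fun t => ε * g t) I := by
    exact ((continuousOn_const.mul hgcont).integrableOn_Icc)
  have hbound_ae : ∀ᵐ t ∂(volume.restrict I), |g' t| ≤ ε * g t := by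
    filter_upwards [hnotS, hmemI] with t htS htI
    exact hbound t ⟨htI, htS⟩
  -- g' is integrable on I
  have hg'_int : IntegrableOn g' I := by
    refine hmaj.mono' hg'_aesm ?_
    filter_upwards [hbound_ae] with t h using by simpa using h
  have hg'_ii : IntervalIntegrable g' volume c b :=
    (intervalIntegrable_iff_integrableOn_Icc_of_le hab).mpr hg'_int
  -- g' * sin is integrable on I
  have hg'sin_int : IntegrableOn (fun t => g' t * Real.sin t) I := by
    refine hmaj.mono' (hg'_aesm.mul (Real.continuous_sin.aestronglyMeasurable)) ?_
    filter_upwards [hbound_ae] with t h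
    refine le_trans ?_ h
    rw [Real.norm_eq_abs, abs_mul]
    nlinarith [abs_sin_le_one t, abs_nonneg (g' t), abs_nonneg (Real.sin t)]
  have hg'sin_ii : IntervalIntegrable (fun t => g' t * Real.sin t) volume c b :=
    (intervalIntegrable_iff_integrableOn_Icc_of_le hab).mpr hg'sin_int
  have hg_ii : IntervalIntegrable g volume c b := by
    apply ContinuousOn.intervalIntegrable
    rwa [Set.uIcc_of_le hab]
  have hgcos_ii : IntervalIntegrable (fun t => g t * Real.cos t) volume c b := by
    apply ContinuousOn.intervalIntegrable
    rw [Set.uIcc_of_le hab]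
    exact hgcont.mul Real.continuous_cos.continuousOn
  -- FTC for g
  have ftc1 : ∫ t in c..b, g' t = g b - g c := by
    refine MeasureTheory.integral_eq_of_hasDerivAt_off_countable_of_le g g' hab
      S.countable_toSet hgcont (fun t ht => ?_) hg'_ii
    exact hderiv t ⟨Set.Ioo_subset_Icc_self ht.1, ht.2⟩
  -- FTC for g * sin
  have ftc2 : ∫ t in c..b, (g' t * Real.sin t + g t * Real.cos t) =
      g b * Real.sin b - g c * Real.sin c := by
    refine MeasureTheory.integral_eq_of_hasDerivAt_off_countable_of_le
      (fun t => g t * Real.sin t) (fun t => g' t * Real.sin t + g t * Real.cos t) hab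
      S.countable_toSet (hgcont.mul Real.continuous_sin.continuousOn)
      (fun t ht => ?_) (hg'sin_ii.add hgcos_ii)
    exact (hderiv t ⟨Set.Ioo_subset_Icc_self ht.1, ht.2⟩).mul (Real.hasDerivAt_sin t)
  have hsinb : Real.sin b = Real.sin c := by
    have : b = c + n * (2 * π) := by rw [hb]; ring
    rw [this, Real.sin_add_nat_mul_two_pi]
  have key : ∫ t in c..b, g t * Real.cos t =
      (∫ t in c..b, g' t) * Real.sin c - ∫ t in c..b, g' t * Real.sin t := by
    have := intervalIntegral.integral_add hg'sin_ii hgcos_ii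
    rw [ftc2, hsinb] at this
    rw [ftc1]
    linarith [this]
  -- bounds on the two pieces
  have hIoc_sub : Set.uIoc c b ⊆ I := by
    rw [Set.uIoc_of_le hab]
    exact Set.Ioc_subset_Icc_self
  have hbound_uIoc : ∀ᵐ t ∂(volume.restrict (Set.uIoc c b)), |g' t| ≤ ε * g t := by
    have h1 : ∀ᵐ t ∂(volume.restrict (Set.uIoc c b)), t ∉ (S : Set ℝ) :=
      ae_restrict_of_ae (measure_eq_zero_iff_ae_notMem.mp hSnull)
    have h2 : ∀ᵐ t ∂(volume.restrict (Set.uIoc c b)), t ∈ Set.uIoc c b :=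
      ae_restrict_mem measurableSet_uIoc
    filter_upwards [h1, h2] with t htS htI
    exact hbound t ⟨hIoc_sub htI, htS⟩
  have hintpos : 0 < ∫ t in c..b, g t := by
    refine intervalIntegral.intervalIntegral_pos_of_pos_on hg_ii
      (fun t ht => hgpos t (Set.Ioo_subset_Icc_self ht)) hcb
  have hmaj_ii : IntervalIntegrable (fun t => ε * g t) volume c b := hg_ii.const_mul ε
  have hεg : ∫ t in c..b, ε * g t = ε * ∫ t in c..b, g t := by
    simp [intervalIntegral.integral_const_mul]
  have habs : |∫ t in c..b, ε * g t| = ε * ∫ t in c..b, g t := by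
    rw [hεg]; exact abs_of_pos (mul_pos hε0 hintpos)
  have bnd1 : |∫ t in c..b, g' t| ≤ ε * ∫ t in c..b, g t := by
    rw [← habs, ← Real.norm_eq_abs (∫ t in c..b, g' t)]
    refine intervalIntegral.norm_integral_le_abs_of_norm_le ?_ hmaj_ii
    filter_upwards [hbound_uIoc] with t h using by simpa using h
  have bnd2 : |∫ t in c..b, g' t * Real.sin t| ≤ ε * ∫ t in c..b, g t := by
    rw [← habs, ← Real.norm_eq_abs (∫ t in c..b, g' t * Real.sin t)]
    refine intervalIntegral.norm_integral_le_abs_of_norm_le ?_ hmaj_ii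
    filter_upwards [hbound_uIoc] with t h
    refine le_trans ?_ h
    rw [Real.norm_eq_abs, abs_mul]
    nlinarith [abs_sin_le_one t, abs_nonneg (g' t), abs_nonneg (Real.sin t)]
  -- main estimate
  have main : |∫ t in c..b, g t * Real.cos t| ≤ 2 * ε * ∫ t in c..b, g t := by
    rw [key]
    calc |(∫ t in c..b, g' t) * Real.sin c - ∫ t in c..b, g' t * Real.sin t|
        ≤ |(∫ t in c..b, g' t) * Real.sin c| + |∫ t in c..b, g' t * Real.sin t| :=
          abs_sub _ _
      _ ≤ |∫ t in c..b, g' t| + |∫ t in c..b, g' t * Real.sin t| := by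
          have : |(∫ t in c..b, g' t) * Real.sin c| ≤ |∫ t in c..b, g' t| := by
            rw [abs_mul]
            nlinarith [abs_sin_le_one c, abs_nonneg (∫ t in c..b, g' t),
              abs_nonneg (Real.sin c)]
          linarith
      _ ≤ 2 * ε * ∫ t in c..b, g t := by linarith
  constructor
  · have hpi : (1:ℝ) < π := by linarith [Real.pi_gt_three]
    have : 2 * ε * ∫ t in c..b, g t < 2 * π * ε * ∫ t in c..b, g t := by
      nlinarith [mul_pos (mul_pos hε0 hintpos) (sub_pos.mpr hpi)]
    linarith
  · have : 2 * ε * ∫ t in c..b, g t ≤ 4 * ε * ∫ t in c..b, g t := by nlinarith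
    linarith
end

section
/- Let θ ∈ C²(ℝ) with θ' > 0, |θ''(t)/(θ'(t))²| ≤ ε for all t, and sup_t θ'(t) / inf_t θ'(t) = M' < +∞. Define Δθ(τ, t) = θ(τ) − θ(t) − θ'(t)(τ − t). Then for all t, τ ∈ ℝ, |e^{−iΔθ(τ,t)} − 1| ≤ M' ε θ'(τ) θ'(t) (τ − t)². -/
open Real Complex

theorem aux_inv_lipschitz (ε : ℝ) (θ : ℝ → ℝ)
    (hθ : ContDiff ℝ 2 θ)
    (hpos : ∀ t, 0 < deriv θ t)
    (hosc : ∀ t, |deriv (deriv θ) t / (deriv θ t) ^ 2| ≤ ε) :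
    ∀ s t : ℝ, |deriv θ s - deriv θ t| ≤ ε * deriv θ s * deriv θ t * |s - t| := by
  have hd1 : Differentiable ℝ (deriv θ) := by
    have h := ContDiff.iterate_deriv' 1 1 (show ContDiff ℝ ((1+1:ℕ)) θ by exact_mod_cast hθ)
    rw [Function.iterate_one] at h
    exact h.differentiable (by norm_num)
  have key : ∀ s t : ℝ, |(deriv θ s)⁻¹ - (deriv θ t)⁻¹| ≤ ε * |s - t| := by
    intro s t
    have := Convex.norm_image_sub_le_of_norm_hasDerivWithin_le
      (f := fun x => (deriv θ x)⁻¹)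
      (f' := fun x => -(deriv (deriv θ) x) / (deriv θ x) ^ 2)
      (s := Set.univ) (C := ε)
      (fun x _ => ((hd1 x).hasDerivAt.inv (hpos x).ne').hasDerivWithinAt)
      (fun x _ => by
        have := hosc x
        rw [Real.norm_eq_abs, abs_div, abs_neg, ← abs_div]
        exact this)
      convex_univ (Set.mem_univ t) (Set.mem_univ s)
    simpa [Real.norm_eq_abs] using this
  intro s t
  have hs := hpos s
  have ht := hpos t
  have h := key s t
  have heq : (deriv θ s)⁻¹ - (deriv θ t)⁻¹ = (deriv θ t - deriv θ s) / (deriv θ s * deriv θ t) := by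
    field_simp
  rw [heq, abs_div, abs_of_pos (mul_pos hs ht), div_le_iff₀ (mul_pos hs ht)] at h
  calc |deriv θ s - deriv θ t| = |deriv θ t - deriv θ s| := abs_sub_comm _ _
    _ ≤ ε * |s - t| * (deriv θ s * deriv θ t) := h
    _ = ε * deriv θ s * deriv θ t * |s - t| := by ring

/-- If `θ ∈ C²(ℝ)` with `θ' > 0`, `|θ''/(θ')²| ≤ ε`, and
`sup θ' / inf θ' ≤ M'`, then with `Δθ(τ,t) = θ(τ) − θ(t) − θ'(t)(τ − t)` one has
`|e^{−iΔθ(τ,t)} − 1| ≤ M' ε θ'(τ) θ'(t) (τ − t)²` for all `t, τ`. -/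
theorem exp_taylor_remainder_quadratic_bound (ε M' : ℝ) (θ : ℝ → ℝ)
    (hθ : ContDiff ℝ 2 θ)
    (hpos : ∀ t, 0 < deriv θ t)
    (hosc : ∀ t, |deriv (deriv θ) t / (deriv θ t) ^ 2| ≤ ε)
    (hM : ∀ s t : ℝ, deriv θ s ≤ M' * deriv θ t) :
    ∀ t τ : ℝ,
      ‖(Complex.exp (-(Complex.I * ((θ τ - θ t - deriv θ t * (τ - t) : ℝ) : ℂ))) - 1)‖ ≤
        M' * ε * deriv θ τ * deriv θ t * (τ - t) ^ 2 := by
  intro t τ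
  have hεnn : 0 ≤ ε := le_trans (abs_nonneg _) (hosc 0)
  have hθd : Differentiable ℝ θ := hθ.differentiable (by norm_num)
  have hlip := aux_inv_lipschitz ε θ hθ hpos hosc
  -- Step 1: bound on the Taylor remainder
  set Δ : ℝ := θ τ - θ t - deriv θ t * (τ - t) with hΔ
  have hrem : |Δ| ≤ M' * ε * deriv θ τ * deriv θ t * (τ - t) ^ 2 := by
    set C : ℝ := ε * (M' * deriv θ τ) * deriv θ t * |τ - t| with hC
    have hmvt := Convex.norm_image_sub_le_of_norm_hasDerivWithin_le
      (f := fun s => θ s - θ t - deriv θ t * (s - t))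
      (f' := fun s => deriv θ s - deriv θ t)
      (s := Set.uIcc t τ) (C := C)
      (fun x _ => by
        have h1 : HasDerivAt (fun s => θ s - θ t - deriv θ t * (s - t))
            (deriv θ x - deriv θ t) x := by
          have := ((hθd x).hasDerivAt.sub_const (θ t)).sub
            (((hasDerivAt_id x).sub_const t).const_mul (deriv θ t))
          simp only [mul_one] at this
          exact this
        exact h1.hasDerivWithinAt)
      (fun x hx => by
        rw [Real.norm_eq_abs]
        refine le_trans (hlip x t) ?_
        have hxle : |x - t| ≤ |τ - t| := by
          rcases le_total t τ with h | h
          · rw [Set.uIcc_of_le h] at hx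
            rw [_root_.abs_of_nonneg (by linarith [hx.1] : (0:ℝ) ≤ x - t), _root_.abs_of_nonneg (by linarith : (0:ℝ) ≤ τ - t)]
            linarith [hx.2]
          · rw [Set.uIcc_of_ge h] at hx
            rw [abs_of_nonpos (by linarith [hx.2] : x - t ≤ (0:ℝ)), abs_of_nonpos (by linarith : τ - t ≤ (0:ℝ))]
            linarith [hx.1]
        have hx1 : ε * deriv θ x * deriv θ t * |x - t| ≤ C := by
          rw [hC]
          have hθx := (hpos x).le
          have hθt := (hpos t).le
          have h1 : deriv θ x ≤ M' * deriv θ τ := hM x τ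
          have h2 : ε * deriv θ x * deriv θ t * |x - t| ≤ ε * (M' * deriv θ τ) * deriv θ t * |x - t| := by
            apply mul_le_mul_of_nonneg_right _ (abs_nonneg _)
            apply mul_le_mul_of_nonneg_right _ hθt
            exact mul_le_mul_of_nonneg_left h1 hεnn
          refine h2.trans ?_
          apply mul_le_mul_of_nonneg_left hxle
          have hM0 : 0 ≤ M' := by nlinarith [hM t t, hpos t]
          have := (hpos τ).le; have := (hpos t).le
          exact mul_nonneg (mul_nonneg hεnn (mul_nonneg hM0 ‹0 ≤ deriv θ τ›)) ‹0 ≤ deriv θ t›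
        exact hx1)
      (convex_uIcc t τ) Set.left_mem_uIcc Set.right_mem_uIcc
    have hsimp : (fun s => θ s - θ t - deriv θ t * (s - t)) τ -
        (fun s => θ s - θ t - deriv θ t * (s - t)) t = Δ := by
      simp [hΔ]
    rw [hsimp] at hmvt
    rw [Real.norm_eq_abs, Real.norm_eq_abs] at hmvt
    refine hmvt.trans ?_
    rw [hC]
    have : ε * (M' * deriv θ τ) * deriv θ t * |τ - t| * |τ - t|
        = M' * ε * deriv θ τ * deriv θ t * (|τ - t|) ^ 2 := by ring
    rw [this, _root_.sq_abs]
  -- Step 2: |exp(-iΔ) - 1| ≤ |Δ|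
  have hexp : ‖Complex.exp (-(Complex.I * (Δ : ℂ))) - 1‖ ≤ |Δ| := by
    have := Convex.norm_image_sub_le_of_norm_hasDerivWithin_le
      (f := fun s : ℝ => Complex.exp (-(Complex.I * (s : ℂ))))
      (f' := fun s : ℝ => -Complex.I * Complex.exp (-(Complex.I * (s : ℂ))))
      (s := Set.univ) (C := 1)
      (fun x _ => by
        have h1 : HasDerivAt (fun s : ℝ => -(Complex.I * (s : ℂ))) (-Complex.I) x := by
          have h0 := ((Complex.ofRealCLM.hasDerivAt (x := x)).const_mul Complex.I).neg
          simp only [Complex.ofRealCLM_apply, Complex.ofReal_one, mul_one] at h0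
          exact h0
        have h2 := h1.cexp
        rw [mul_comm] at h2
        exact h2.hasDerivWithinAt)
      (fun x _ => by
        simp [Complex.norm_exp])
      convex_univ (Set.mem_univ 0) (Set.mem_univ Δ)
    simpa [Real.norm_eq_abs] using this
  exact hexp.trans hrem
end

section
/- Let ψ: ℝ → ℂ be a C¹ wavelet function with I₁ = ∫_ℝ |ψ(τ)| dτ < ∞ and I₂ = ∫_ℝ |τ ψ'(τ)| dτ < ∞, and let (a, θ) ∈ U_ε with A = sup_{t∈ℝ} |a(t)| < ∞. Then for every t ∈ ℝ and ω > 0, ω^{−1/2} | ∫_ℝ (a(τ) − a(t)) e^{−iθ(τ)} ψ((τ − t)/ω) dτ | ≤ ε ω^{1/2} [ (A + |a(t)| + 1) I₁ + M' I₂ ]. -/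
open Real MeasureTheory intervalIntegral

noncomputable section

/-- For a `C¹` wavelet `ψ` with `I₁ = ∫|ψ| < ∞` and
`I₂ = ∫|τψ'| < ∞`, and `(a, θ) ∈ U_ε` with `|a| ≤ A`, one has, for every `t` and `ω > 0`,
`ω^{−1/2} |∫ (a(τ) − a(t)) e^{−iθ(τ)} ψ((τ−t)/ω) dτ| ≤ ε ω^{1/2} [(A + |a(t)| + 1) I₁ + M' I₂]`. -/
theorem wavelet_envelope_variation_bound (ε M' A : ℝ) (ψ : ℝ → ℂ) (a θ : ℝ → ℝ)
    (hψ : ContDiff ℝ 1 ψ)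
    (hI1 : Integrable ψ)
    (hI2 : Integrable (fun τ : ℝ => (τ : ℂ) * deriv ψ τ))
    (hU : UEps ε M' a θ)
    (hA : ∀ t : ℝ, |a t| ≤ A)
    (t ω : ℝ) (hω : 0 < ω) :
    (Real.sqrt ω)⁻¹ *
        ‖(∫ τ : ℝ, ((a τ - a t : ℝ) : ℂ) *
          Complex.exp (-(Complex.I * (θ τ : ℂ))) * ψ ((τ - t) / ω))‖ ≤
      ε * Real.sqrt ω *
        ((A + |a t| + 1) * (∫ τ : ℝ, ‖ψ τ‖) +
          M' * (∫ τ : ℝ, ‖(τ : ℂ) * deriv ψ τ‖)) := by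
  obtain ⟨ha1, hθ2, -, hθpos, ⟨c, hc, hcle⟩, hεa, hεθ, hM⟩ := hU
  have hωne : ω ≠ 0 := hω.ne'
  have hε0 : 0 ≤ ε := le_trans (abs_nonneg _) (hεa 0)
  have hA0 : 0 ≤ A := le_trans (abs_nonneg _) (hA 0)
  have hM0 : 0 ≤ M' := by nlinarith [hM 0 0, hθpos 0]
  -- differentiability facts
  have hθ2' : ContDiff ℝ 1 (deriv θ) := by
    have := contDiff_succ_iff_deriv.mp (show ContDiff ℝ (1+1) θ by exact_mod_cast hθ2)
    exact this.2.2
  have haD : ∀ s : ℝ, HasDerivAt a (deriv a s) s := fun s =>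
    (ha1.differentiable one_ne_zero s).hasDerivAt
  have hθD : ∀ s : ℝ, HasDerivAt θ (deriv θ s) s := fun s =>
    (hθ2.differentiable two_ne_zero s).hasDerivAt
  have hθ'D : ∀ s : ℝ, HasDerivAt (deriv θ) (deriv (deriv θ) s) s := fun s =>
    (hθ2'.differentiable one_ne_zero s).hasDerivAt
  have hψD : ∀ x : ℝ, HasDerivAt ψ (deriv ψ x) x := fun x =>
    (hψ.differentiable one_ne_zero x).hasDerivAt
  have ca' : Continuous (deriv a) := ha1.continuous_deriv le_rfl
  have cθ' : Continuous (deriv θ) := hθ2.continuous_deriv one_le_two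
  have cθ'' : Continuous (deriv (deriv θ)) := hθ2'.continuous_deriv le_rfl
  have cψ' : Continuous (deriv ψ) := hψ.continuous_deriv le_rfl
  have hθne : ∀ s, deriv θ s ≠ 0 := fun s => (hθpos s).ne'
  -- pointwise bounds from U_ε
  have habs : ∀ s, |deriv a s| ≤ ε * deriv θ s := by
    intro s
    have h := hεa s
    rw [abs_div, abs_of_pos (hθpos s), div_le_iff₀ (hθpos s)] at h
    linarith
  have hθ''abs : ∀ s, |deriv (deriv θ) s / (deriv θ s) ^ 2| ≤ ε := hεθ
  have hvar : ∀ τ : ℝ, |a τ - a t| ≤ ε * M' * deriv θ τ * |τ - t| := by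
    intro τ
    have hftc : a τ - a t = ∫ s in t..τ, deriv a s := by
      rw [intervalIntegral.integral_deriv_eq_sub (fun x _ => ha1.differentiable one_ne_zero x)
        (ca'.intervalIntegrable _ _)]
    have hb : ∀ x ∈ Set.uIoc t τ, ‖deriv a x‖ ≤ ε * M' * deriv θ τ := by
      intro x _
      calc ‖deriv a x‖ = |deriv a x| := rfl
        _ ≤ ε * deriv θ x := habs x
        _ ≤ ε * (M' * deriv θ τ) := mul_le_mul_of_nonneg_left (hM x τ) hε0
        _ = ε * M' * deriv θ τ := by ring
    have h2 := intervalIntegral.norm_integral_le_of_norm_le_const hb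
    rw [hftc]
    exact h2
  -- the functions
  set ψc : ℝ → ℂ := fun τ => ψ ((τ - t) / ω) with hψcdef
  set ψd : ℝ → ℂ := fun τ => deriv ψ ((τ - t) / ω) with hψddef
  set E : ℝ → ℂ := fun τ => Complex.exp (-(Complex.I * (θ τ : ℂ))) with hEdef
  set u : ℝ → ℂ := fun τ => ((a τ - a t : ℝ) : ℂ) * ψc τ with hudef
  set u' : ℝ → ℂ := fun τ => ((deriv a τ : ℝ) : ℂ) * ψc τ + ((a τ - a t : ℝ) : ℂ) * (ω⁻¹ • ψd τ)
    with hu'def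
  set w : ℝ → ℂ := fun τ => Complex.I * ((deriv (deriv θ) τ / (deriv θ τ)^2 : ℝ) : ℂ) * E τ
    with hwdef
  set v : ℝ → ℂ := fun τ => Complex.I * E τ / ((deriv θ τ : ℝ) : ℂ) with hvdef
  set v' : ℝ → ℂ := fun τ => E τ - w τ with hv'def
  -- derivatives
  have huD : ∀ τ, HasDerivAt u (u' τ) τ := by
    intro τ
    have h1 : HasDerivAt (fun s : ℝ => ((a s - a t : ℝ) : ℂ)) ((deriv a τ : ℝ) : ℂ) τ :=
      ((haD τ).sub_const (a t)).ofReal_comp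
    have hg : HasDerivAt (fun s : ℝ => (s - t) / ω) ω⁻¹ τ := by
      simpa using ((hasDerivAt_id τ).sub_const t).div_const ω
    have h2 : HasDerivAt ψc (ω⁻¹ • ψd τ) τ := (hψD ((τ - t) / ω)).scomp τ hg
    exact h1.mul h2
  have hvD : ∀ τ, HasDerivAt v (v' τ) τ := by
    intro τ
    have hne : ((deriv θ τ : ℝ) : ℂ) ≠ 0 := by exact_mod_cast hθne τ
    have hinner : HasDerivAt (fun s : ℝ => -(Complex.I * (θ s : ℂ)))
        (-(Complex.I * ((deriv θ τ : ℝ) : ℂ))) τ := (((hθD τ).ofReal_comp).const_mul Complex.I).neg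
    have hED : HasDerivAt E (E τ * -(Complex.I * ((deriv θ τ : ℝ) : ℂ))) τ := hinner.cexp
    have hdD : HasDerivAt (fun s : ℝ => ((deriv θ s : ℝ) : ℂ)) ((deriv (deriv θ) τ : ℝ) : ℂ) τ :=
      (hθ'D τ).ofReal_comp
    have h := (hED.const_mul Complex.I).div hdD hne
    refine h.congr_deriv ?_
    symm
    rw [hv'def, hwdef]
    push_cast [div_eq_mul_inv]
    field_simp
    ring_nf
    simp [Complex.I_sq]
  -- continuity
  have cg : Continuous fun s : ℝ => (s - t) / ω := (continuous_id.sub continuous_const).div_const ω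
  have cψc : Continuous ψc := hψ.continuous.comp cg
  have cψd : Continuous ψd := cψ'.comp cg
  have cE : Continuous E :=
    Complex.continuous_exp.comp ((continuous_const.mul
      (Complex.continuous_ofReal.comp hθ2.continuous)).neg)
  have cθc : Continuous fun s : ℝ => ((deriv θ s : ℝ) : ℂ) := Complex.continuous_ofReal.comp cθ'
  have cu : Continuous u :=
    (Complex.continuous_ofReal.comp (ha1.continuous.sub continuous_const)).mul cψc
  have cu' : Continuous u' :=
    ((Complex.continuous_ofReal.comp ca').mul cψc).add
      ((Complex.continuous_ofReal.comp (ha1.continuous.sub continuous_const)).mul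
        (cψd.const_smul ω⁻¹))
  have cv : Continuous v :=
    (continuous_const.mul cE).div cθc (fun s => by exact_mod_cast hθne s)
  have cw : Continuous w :=
    (continuous_const.mul (Complex.continuous_ofReal.comp
      (cθ''.div (cθ'.pow 2) (fun s => pow_ne_zero 2 (hθne s))))).mul cE
  have cv' : Continuous v' := cE.sub cw
  -- norms
  have hEabs : ∀ τ, ‖E τ‖ = 1 := by
    intro τ
    rw [hEdef]
    simp [Complex.norm_exp]
  have hvabs : ∀ τ, ‖v τ‖ = (deriv θ τ)⁻¹ := by
    intro τ
    rw [hvdef]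
    simp only [norm_div, norm_mul, Complex.norm_I, Complex.norm_real, Real.norm_eq_abs, one_mul]
    rw [hEabs τ, abs_of_pos (hθpos τ), one_div]
  have hwabs : ∀ τ, ‖w τ‖ ≤ ε := by
    intro τ
    rw [hwdef]
    simp only [norm_mul, Complex.norm_I, Complex.norm_real, Real.norm_eq_abs, one_mul]
    rw [hEabs τ, mul_one]
    exact hεθ τ
  have huabs : ∀ τ, ‖u τ‖ ≤ (A + |a t|) * ‖ψc τ‖ := by
    intro τ
    rw [hudef]
    simp only [norm_mul, Complex.norm_real, Real.norm_eq_abs]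
    have : |a τ - a t| ≤ A + |a t| := (abs_sub _ _).trans (add_le_add_left (hA τ) _)
    exact mul_le_mul_of_nonneg_right this (norm_nonneg _)
  -- integrability of composed functions
  have hint1 : Integrable ψc := (hI1.comp_div hωne).comp_sub_right t
  have hint2 : Integrable (fun τ : ℝ => (((τ - t) / ω : ℝ) : ℂ) * ψd τ) :=
    (hI2.comp_div hωne).comp_sub_right t
  -- values of the composed integrals
  have hval1 : (∫ τ : ℝ, ‖ψc τ‖) = ω * ∫ τ : ℝ, ‖ψ τ‖ := by
    have h1 : (∫ τ : ℝ, ‖ψ ((τ - t) / ω)‖) = ∫ τ : ℝ, ‖ψ (τ / ω)‖ :=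
      integral_sub_right_eq_self (fun x => ‖ψ (x / ω)‖) t
    rw [hψcdef]
    simp only []
    rw [h1, MeasureTheory.Measure.integral_comp_div (fun y => ‖ψ y‖) ω, abs_of_pos hω,
      smul_eq_mul]
  have hval2 : (∫ τ : ℝ, ‖(((τ - t) / ω : ℝ) : ℂ) * ψd τ‖)
      = ω * ∫ τ : ℝ, ‖(τ : ℂ) * deriv ψ τ‖ := by
    have h1 : (∫ τ : ℝ, ‖(((τ - t) / ω : ℝ) : ℂ) * deriv ψ ((τ - t) / ω)‖)
        = ∫ τ : ℝ, ‖((τ / ω : ℝ) : ℂ) * deriv ψ (τ / ω)‖ :=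
      integral_sub_right_eq_self (fun x => ‖((x / ω : ℝ) : ℂ) * deriv ψ (x / ω)‖) t
    rw [hψddef]
    simp only []
    rw [h1, MeasureTheory.Measure.integral_comp_div (fun y => ‖((y : ℝ) : ℂ) * deriv ψ y‖) ω,
      abs_of_pos hω, smul_eq_mul]
  -- pointwise bounds on the products
  have hb1 : ∀ τ, ‖u' τ * v τ‖ ≤ ε * ‖ψc τ‖ + ε * M' * ‖(((τ - t) / ω : ℝ) : ℂ) * ψd τ‖ := by
    intro τ
    have hτω : ‖(((τ - t) / ω : ℝ) : ℂ) * ψd τ‖ = |τ - t| * ω⁻¹ * ‖ψd τ‖ := by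
      rw [norm_mul, Complex.norm_real, Real.norm_eq_abs, abs_div, abs_of_pos hω, div_eq_mul_inv]
    have h2 : ‖u' τ‖ ≤ ε * deriv θ τ * ‖ψc τ‖
        + ε * M' * deriv θ τ * (|τ - t| * ω⁻¹ * ‖ψd τ‖) := by
      rw [hu'def]
      simp only []
      refine (norm_add_le _ _).trans ?_
      have e1 : ‖((deriv a τ : ℝ) : ℂ) * ψc τ‖ = |deriv a τ| * ‖ψc τ‖ := by
        rw [norm_mul, Complex.norm_real, Real.norm_eq_abs]
      have e2 : ‖((a τ - a t : ℝ) : ℂ) * (ω⁻¹ • ψd τ)‖ = |a τ - a t| * (ω⁻¹ * ‖ψd τ‖) := by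
        rw [norm_mul, norm_smul, Complex.norm_real, Real.norm_eq_abs, Real.norm_eq_abs,
          abs_of_pos (inv_pos.mpr hω)]
      rw [e1, e2]
      refine add_le_add (mul_le_mul_of_nonneg_right (habs τ) (norm_nonneg _)) ?_
      calc |a τ - a t| * (ω⁻¹ * ‖ψd τ‖)
          ≤ ε * M' * deriv θ τ * |τ - t| * (ω⁻¹ * ‖ψd τ‖) :=
            mul_le_mul_of_nonneg_right (hvar τ) (by positivity)
        _ = ε * M' * deriv θ τ * (|τ - t| * ω⁻¹ * ‖ψd τ‖) := by ring
    calc ‖u' τ * v τ‖ = ‖u' τ‖ * (deriv θ τ)⁻¹ := by rw [norm_mul, hvabs τ]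
      _ ≤ (ε * deriv θ τ * ‖ψc τ‖ + ε * M' * deriv θ τ * (|τ - t| * ω⁻¹ * ‖ψd τ‖))
          * (deriv θ τ)⁻¹ := mul_le_mul_of_nonneg_right h2 (inv_nonneg.mpr (hθpos τ).le)
      _ = ε * ‖ψc τ‖ + ε * M' * (|τ - t| * ω⁻¹ * ‖ψd τ‖) := by
          field_simp [hθne τ]
      _ = ε * ‖ψc τ‖ + ε * M' * ‖(((τ - t) / ω : ℝ) : ℂ) * ψd τ‖ := by rw [hτω]
  have hb2 : ∀ τ, ‖u τ * w τ‖ ≤ (A + |a t|) * ε * ‖ψc τ‖ := by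
    intro τ
    calc ‖u τ * w τ‖ = ‖u τ‖ * ‖w τ‖ := norm_mul _ _
      _ ≤ ((A + |a t|) * ‖ψc τ‖) * ε :=
          mul_le_mul (huabs τ) (hwabs τ) (norm_nonneg _)
            (mul_nonneg (add_nonneg hA0 (abs_nonneg _)) (norm_nonneg _))
      _ = (A + |a t|) * ε * ‖ψc τ‖ := by ring
  have hb3 : ∀ τ, ‖u τ * E τ‖ ≤ (A + |a t|) * ‖ψc τ‖ := by
    intro τ
    rw [norm_mul, hEabs τ, mul_one]
    exact huabs τ
  have hb4 : ∀ τ, ‖u τ * v τ‖ ≤ c⁻¹ * ((A + |a t|) * ‖ψc τ‖) := by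
    intro τ
    rw [norm_mul, hvabs τ]
    calc ‖u τ‖ * (deriv θ τ)⁻¹ ≤ ((A + |a t|) * ‖ψc τ‖) * c⁻¹ :=
        mul_le_mul (huabs τ) (inv_anti₀ hc (hcle τ)) (inv_nonneg.mpr (hθpos τ).le)
          (mul_nonneg (add_nonneg hA0 (abs_nonneg _)) (norm_nonneg _))
      _ = c⁻¹ * ((A + |a t|) * ‖ψc τ‖) := by ring
  -- integrability of products
  have hm1 : Integrable (fun τ : ℝ =>
      ε * ‖ψc τ‖ + ε * M' * ‖(((τ - t) / ω : ℝ) : ℂ) * ψd τ‖) :=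
    (hint1.norm.const_mul ε).add (hint2.norm.const_mul (ε * M'))
  have hiu'v : Integrable (fun τ : ℝ => u' τ * v τ) :=
    Integrable.mono' hm1 ((cu'.mul cv).aestronglyMeasurable)
      (Filter.Eventually.of_forall hb1)
  have hiuw : Integrable (fun τ : ℝ => u τ * w τ) :=
    Integrable.mono' (hint1.norm.const_mul ((A + |a t|) * ε))
      ((cu.mul cw).aestronglyMeasurable)
      (Filter.Eventually.of_forall (fun τ => by simpa [mul_assoc] using hb2 τ))
  have hiuE : Integrable (fun τ : ℝ => u τ * E τ) :=
    Integrable.mono' (hint1.norm.const_mul (A + |a t|))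
      ((cu.mul cE).aestronglyMeasurable)
      (Filter.Eventually.of_forall hb3)
  have hiuv : Integrable (fun τ : ℝ => u τ * v τ) :=
    Integrable.mono' ((hint1.norm.const_mul (A + |a t|)).const_mul c⁻¹)
      ((cu.mul cv).aestronglyMeasurable)
      (Filter.Eventually.of_forall (fun τ => by simpa [mul_assoc] using hb4 τ))
  have hiuv' : Integrable (fun τ : ℝ => u τ * v' τ) := by
    have heq : (fun τ : ℝ => u τ * v' τ) = fun τ : ℝ => u τ * E τ - u τ * w τ := by
      funext τ
      rw [hv'def]
      ring
    rw [heq]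
    exact hiuE.sub hiuw
  -- integration by parts
  have hIBP : (∫ τ : ℝ, u τ * v' τ) = -∫ τ : ℝ, u' τ * v τ :=
    MeasureTheory.integral_mul_deriv_eq_deriv_mul_of_integrable (fun x _ => huD x) (fun x _ => hvD x) hiuv' hiu'v hiuv
  -- the key bound
  have key : ‖∫ τ : ℝ, ((a τ - a t : ℝ) : ℂ) * E τ * ψc τ‖
      ≤ ε * ω * ((A + |a t| + 1) * (∫ τ : ℝ, ‖ψ τ‖)
        + M' * ∫ τ : ℝ, ‖(τ : ℂ) * deriv ψ τ‖) := by
    have hsplit : (fun τ : ℝ => ((a τ - a t : ℝ) : ℂ) * E τ * ψc τ)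
        = fun τ : ℝ => u τ * v' τ + u τ * w τ := by
      funext τ
      rw [hudef, hv'def, hwdef]
      simp only []
      ring
    have h0 : (∫ τ : ℝ, ((a τ - a t : ℝ) : ℂ) * E τ * ψc τ)
        = (∫ τ : ℝ, u τ * v' τ) + ∫ τ : ℝ, u τ * w τ := by
      rw [hsplit]
      exact integral_add hiuv' hiuw
    rw [h0]
    calc ‖(∫ τ : ℝ, u τ * v' τ) + ∫ τ : ℝ, u τ * w τ‖
        ≤ ‖∫ τ : ℝ, u τ * v' τ‖ + ‖∫ τ : ℝ, u τ * w τ‖ := norm_add_le _ _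
      _ = ‖∫ τ : ℝ, u' τ * v τ‖ + ‖∫ τ : ℝ, u τ * w τ‖ := by rw [hIBP, norm_neg]
      _ ≤ (∫ τ : ℝ, ‖u' τ * v τ‖) + ∫ τ : ℝ, ‖u τ * w τ‖ :=
          add_le_add (norm_integral_le_integral_norm _) (norm_integral_le_integral_norm _)
      _ ≤ (∫ τ : ℝ, (ε * ‖ψc τ‖ + ε * M' * ‖(((τ - t) / ω : ℝ) : ℂ) * ψd τ‖))
          + ∫ τ : ℝ, (A + |a t|) * ε * ‖ψc τ‖ :=
          add_le_add
            (MeasureTheory.integral_mono hiu'v.norm hm1 hb1)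
            (MeasureTheory.integral_mono hiuw.norm
              (hint1.norm.const_mul ((A + |a t|) * ε)) hb2)
      _ = ε * (ω * ∫ τ : ℝ, ‖ψ τ‖) + ε * M' * (ω * ∫ τ : ℝ, ‖(τ : ℂ) * deriv ψ τ‖)
          + (A + |a t|) * ε * (ω * ∫ τ : ℝ, ‖ψ τ‖) := by
          rw [MeasureTheory.integral_add (hint1.norm.const_mul ε)
              (hint2.norm.const_mul (ε * M')),
            MeasureTheory.integral_const_mul, MeasureTheory.integral_const_mul,
            MeasureTheory.integral_const_mul, hval1, hval2]
      _ = ε * ω * ((A + |a t| + 1) * (∫ τ : ℝ, ‖ψ τ‖)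
          + M' * ∫ τ : ℝ, ‖(τ : ℂ) * deriv ψ τ‖) := by ring
  -- conclude
  have hsq : Real.sqrt ω * Real.sqrt ω = ω := Real.mul_self_sqrt hω.le
  have hsqpos : 0 < Real.sqrt ω := Real.sqrt_pos.mpr hω
  have hgoal_eq : (∫ τ : ℝ, ((a τ - a t : ℝ) : ℂ) *
      Complex.exp (-(Complex.I * (θ τ : ℂ))) * ψ ((τ - t) / ω))
      = ∫ τ : ℝ, ((a τ - a t : ℝ) : ℂ) * E τ * ψc τ := rfl
  rw [hgoal_eq]
  calc (Real.sqrt ω)⁻¹ * ‖∫ τ : ℝ, ((a τ - a t : ℝ) : ℂ) * E τ * ψc τ‖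
      ≤ (Real.sqrt ω)⁻¹ * (ε * ω * ((A + |a t| + 1) * (∫ τ : ℝ, ‖ψ τ‖)
        + M' * ∫ τ : ℝ, ‖(τ : ℂ) * deriv ψ τ‖)) :=
        mul_le_mul_of_nonneg_left key (inv_nonneg.mpr hsqpos.le)
    _ = ε * Real.sqrt ω * ((A + |a t| + 1) * (∫ τ : ℝ, ‖ψ τ‖)
        + M' * ∫ τ : ℝ, ‖(τ : ℂ) * deriv ψ τ‖) := by
        have h2 : ε * ω * (((A + |a t| + 1) * ∫ τ : ℝ, ‖ψ τ‖)
            + M' * ∫ τ : ℝ, ‖(τ : ℂ) * deriv ψ τ‖)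
            = Real.sqrt ω * (ε * Real.sqrt ω * (((A + |a t| + 1) * ∫ τ : ℝ, ‖ψ τ‖)
              + M' * ∫ τ : ℝ, ‖(τ : ℂ) * deriv ψ τ‖)) := by
          nth_rewrite 1 [← hsq]
          ring
        rw [h2, inv_mul_cancel_left₀ hsqpos.ne']
end
end

section
/- Let ψ: ℝ → ℂ be a C¹ wavelet function with I₁ = ∫_ℝ |ψ(τ)| dτ < ∞ and I₂ = ∫_ℝ |τ ψ'(τ)| dτ < ∞, and let θ ∈ C²(ℝ) with θ' > 0, inf θ' > 0, and |θ''(t)/(θ'(t))²| ≤ ε for all t. Then for every t ∈ ℝ and ω > 0, | ∫_ℝ (1 − θ'(t)/θ'(τ)) ψ((τ − t)/ω) e^{−iθ'(t)(τ − t)} dτ | ≤ ω (I₁ + I₂) ε. -/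
open Real MeasureTheory Filter Set

/-- For a `C¹` wavelet `ψ` with `I₁ = ∫|ψ| < ∞`, `I₂ = ∫|τψ'| < ∞`,
and a phase `θ ∈ C²(ℝ)` with `θ' > 0`, `inf θ' > 0`, `|θ''/(θ')²| ≤ ε`, one has, for
every `t` and `ω > 0`,
`|∫ (1 − θ'(t)/θ'(τ)) ψ((τ−t)/ω) e^{−iθ'(t)(τ−t)} dτ| ≤ ω (I₁ + I₂) ε`. -/
theorem wavelet_frequency_variation_bound (ε : ℝ) (ψ : ℝ → ℂ) (θ : ℝ → ℝ)
    (hψ : ContDiff ℝ 1 ψ)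
    (hI1 : Integrable ψ)
    (hI2 : Integrable (fun τ : ℝ => (τ : ℂ) * deriv ψ τ))
    (hθ : ContDiff ℝ 2 θ)
    (hpos : ∀ t, 0 < deriv θ t)
    (hinf : ∃ c > 0, ∀ t : ℝ, c ≤ deriv θ t)
    (hosc : ∀ t, |deriv (deriv θ) t / (deriv θ t) ^ 2| ≤ ε)
    (t ω : ℝ) (hω : 0 < ω) :
    ‖∫ τ : ℝ, ((1 - deriv θ t / deriv θ τ : ℝ) : ℂ) * ψ ((τ - t) / ω) *
        Complex.exp (-(Complex.I * ((deriv θ t * (τ - t) : ℝ) : ℂ)))‖ ≤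
      ω * ((∫ τ : ℝ, ‖ψ τ‖) +
          (∫ τ : ℝ, ‖(τ : ℂ) * deriv ψ τ‖)) * ε := by
  obtain ⟨c, hc, hcle⟩ := hinf
  have hε : 0 ≤ ε := le_trans (abs_nonneg _) (hosc t)
  set L := deriv θ t with hLdef
  have hL : 0 < L := hpos t
  -- basic regularity
  have hθ1 : ContDiff ℝ 1 (deriv θ) := by
    have h : ContDiff ℝ ((1 : ℕ) + 1) θ := by exact_mod_cast hθ
    exact_mod_cast (contDiff_succ_iff_deriv.mp h).2.2
  have hθ'c : Continuous (deriv θ) := hθ1.continuous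
  have hθ''c : Continuous (deriv (deriv θ)) := hθ1.continuous_deriv le_rfl
  have hψc : Continuous ψ := hψ.continuous
  have hψ'c : Continuous (deriv ψ) := hψ.continuous_deriv le_rfl
  have hdθ : ∀ τ, HasDerivAt (deriv θ) (deriv (deriv θ) τ) τ :=
    fun τ => ((hθ1.differentiable one_ne_zero) τ).hasDerivAt
  have hdψ : ∀ x, HasDerivAt ψ (deriv ψ x) x :=
    fun x => ((hψ.differentiable one_ne_zero) x).hasDerivAt
  -- notation
  set a : ℝ → ℝ := fun τ => (τ - t) / ω with ha
  set r : ℝ → ℝ := fun τ => 1 - L / deriv θ τ with hr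
  set e : ℝ → ℂ := fun τ => Complex.exp (-(Complex.I * ((L * (τ - t) : ℝ) : ℂ))) with he
  set F : ℝ → ℂ := fun τ => ((r τ : ℝ) : ℂ) * ψ (a τ) * e τ with hF
  set G₁ : ℝ → ℂ :=
    fun τ => ((L * (deriv (deriv θ) τ / (deriv θ τ) ^ 2) : ℝ) : ℂ) * ψ (a τ) * e τ with hG₁
  set G₂ : ℝ → ℂ := fun τ => ((r τ : ℝ) : ℂ) * ((1 / ω : ℝ) • deriv ψ (a τ)) * e τ with hG₂
  have hea : ∀ τ, ‖e τ‖ = 1 := by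
    intro τ
    show ‖_‖ = 1
    simp [he, Complex.norm_exp]
  -- norm helper
  have hnorm3 : ∀ (x : ℝ) (w : ℂ) (τ : ℝ), ‖(x : ℂ) * w * e τ‖ = |x| * ‖w‖ := by
    intro x w τ
    rw [norm_mul, norm_mul, Complex.norm_real, Real.norm_eq_abs, hea τ, mul_one]
  -- the Lipschitz bound |r τ| ≤ L * ε * |τ - t|
  have hrb : ∀ τ, |r τ| ≤ L * ε * |τ - t| := by
    intro τ
    have hphi : ∀ x : ℝ, HasDerivAt (fun y => (deriv θ y)⁻¹)
        (-(deriv (deriv θ) x) / (deriv θ x) ^ 2) x :=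
      fun x => (hdθ x).inv (ne_of_gt (hpos x))
    have hbound : ∀ x ∈ (univ : Set ℝ), ‖deriv (fun y => (deriv θ y)⁻¹) x‖ ≤ ε := by
      intro x _
      rw [(hphi x).deriv]
      have h4 : ‖-(deriv (deriv θ) x) / (deriv θ x) ^ 2‖
          = |deriv (deriv θ) x / (deriv θ x) ^ 2| := by
        rw [Real.norm_eq_abs, neg_div, abs_neg]
      rw [h4]; exact hosc x
    have hmvt := convex_univ.norm_image_sub_le_of_norm_deriv_le
      (f := fun y => (deriv θ y)⁻¹)
      (fun x _ => (hphi x).differentiableAt) hbound (mem_univ t) (mem_univ τ)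
    have hrτ : r τ = L * ((deriv θ t)⁻¹ - (deriv θ τ)⁻¹) := by
      rw [hr]
      have h1 : deriv θ t ≠ 0 := (hpos t).ne'
      have h2 : deriv θ τ ≠ 0 := (hpos τ).ne'
      field_simp
      rw [hLdef]
      ring
    rw [hrτ, abs_mul, abs_of_pos hL, mul_assoc]
    refine mul_le_mul_of_nonneg_left ?_ hL.le
    rw [Real.norm_eq_abs, Real.norm_eq_abs] at hmvt
    calc |(deriv θ t)⁻¹ - (deriv θ τ)⁻¹| = |(deriv θ τ)⁻¹ - (deriv θ t)⁻¹| := abs_sub_comm _ _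
    _ ≤ ε * |τ - t| := hmvt
  -- the uniform bound |r τ| ≤ 1 + L / c
  have hrb2 : ∀ τ, |r τ| ≤ 1 + L / c := by
    intro τ
    have h1 : |r τ| ≤ 1 + |L / deriv θ τ| := by
      calc |r τ| = |1 - L / deriv θ τ| := rfl
      _ ≤ |(1 : ℝ)| + |L / deriv θ τ| := abs_sub _ _
      _ = 1 + |L / deriv θ τ| := by rw [abs_one]
    refine h1.trans ?_
    have h2 : |L / deriv θ τ| = L / deriv θ τ := abs_of_pos (div_pos hL (hpos τ))
    have h3 : L / deriv θ τ ≤ L / c := div_le_div_of_nonneg_left hL.le hc (hcle τ)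
    linarith
  -- integrable comparison functions
  have hψa : Integrable (fun τ => ψ (a τ)) := (hI1.comp_div hω.ne').comp_sub_right t
  have hha : Integrable (fun τ => ((a τ : ℝ) : ℂ) * deriv ψ (a τ)) :=
    (hI2.comp_div hω.ne').comp_sub_right t
  -- continuity of the pieces
  have hrc : Continuous fun τ => ((r τ : ℝ) : ℂ) := by
    apply Complex.continuous_ofReal.comp
    exact continuous_const.sub (continuous_const.div hθ'c (fun x => (hpos x).ne'))
  have hac : Continuous a := (continuous_id.sub continuous_const).div_const ω
  have hec : Continuous e := by
    apply Complex.continuous_exp.comp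
    exact (continuous_const.mul (Complex.continuous_ofReal.comp
      (continuous_const.mul (continuous_id.sub continuous_const)))).neg
  have hFc : Continuous F := (hrc.mul (hψc.comp hac)).mul hec
  have hG₁c : Continuous G₁ := by
    refine ((Complex.continuous_ofReal.comp ?_).mul (hψc.comp hac)).mul hec
    exact continuous_const.mul (hθ''c.div (hθ'c.pow 2) (fun x => pow_ne_zero 2 (hpos x).ne'))
  have hG₂c : Continuous G₂ :=
    (hrc.mul (((hψ'c.comp hac)).const_smul ((1:ℝ)/ω))).mul hec
  -- pointwise norm identities / bounds
  have hFnorm : ∀ τ, ‖F τ‖ = |r τ| * ‖ψ (a τ)‖ := fun τ => hnorm3 _ _ _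
  have hG₁b : ∀ τ, ‖G₁ τ‖ ≤ L * ε * ‖ψ (a τ)‖ := by
    intro τ
    rw [show ‖G₁ τ‖ = |L * (deriv (deriv θ) τ / (deriv θ τ) ^ 2)| * ‖ψ (a τ)‖
      from hnorm3 _ _ _]
    refine mul_le_mul_of_nonneg_right ?_ (norm_nonneg _)
    rw [abs_mul, abs_of_pos hL]
    exact mul_le_mul_of_nonneg_left (hosc τ) hL.le
  have hG₂b : ∀ τ, ‖G₂ τ‖ ≤ L * ε * ‖((a τ : ℝ) : ℂ) * deriv ψ (a τ)‖ := by
    intro τ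
    have h1 : ‖G₂ τ‖ = |r τ| * ((1/ω) * ‖deriv ψ (a τ)‖) := by
      rw [show ‖G₂ τ‖ = |r τ| * ‖(1 / ω : ℝ) • deriv ψ (a τ)‖ from hnorm3 _ _ _]
      rw [norm_smul, Real.norm_eq_abs, abs_of_pos (by positivity : (0:ℝ) < 1/ω)]
    have h2 : ‖((a τ : ℝ) : ℂ) * deriv ψ (a τ)‖ = (|τ - t| / ω) * ‖deriv ψ (a τ)‖ := by
      rw [norm_mul, Complex.norm_real, Real.norm_eq_abs, ha]
      simp only [abs_div, abs_of_pos hω]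
    rw [h1, h2]
    calc |r τ| * ((1/ω) * ‖deriv ψ (a τ)‖)
        ≤ (L * ε * |τ - t|) * ((1/ω) * ‖deriv ψ (a τ)‖) :=
          mul_le_mul_of_nonneg_right (hrb τ) (by positivity)
    _ = L * ε * (|τ - t| / ω * ‖deriv ψ (a τ)‖) := by ring
  -- integrability of F, G₁, G₂
  have hFi : Integrable F := by
    refine (hψa.norm.const_mul (1 + L / c)).mono' hFc.aestronglyMeasurable ?_
    filter_upwards with τ
    rw [hFnorm τ]
    exact mul_le_mul_of_nonneg_right (hrb2 τ) (norm_nonneg _)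
  have hG₁i : Integrable G₁ := by
    refine (hψa.norm.const_mul (L * ε)).mono' hG₁c.aestronglyMeasurable ?_
    filter_upwards with τ
    exact hG₁b τ
  have hG₂i : Integrable G₂ := by
    refine (hha.norm.const_mul (L * ε)).mono' hG₂c.aestronglyMeasurable ?_
    filter_upwards with τ
    exact hG₂b τ
  -- the derivative identity
  have hder : ∀ τ, HasDerivAt F (G₁ τ + G₂ τ - Complex.I * L * F τ) τ := by
    intro τ
    have hrd : HasDerivAt (fun τ => ((r τ : ℝ) : ℂ))
        ((L * (deriv (deriv θ) τ / (deriv θ τ) ^ 2) : ℝ) : ℂ) τ := by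
      have h2 : HasDerivAt r (L * (deriv (deriv θ) τ / (deriv θ τ) ^ 2)) τ := by
        rw [hr]
        simp only [div_eq_mul_inv]
        have h3 := (((hdθ τ).inv (ne_of_gt (hpos τ))).const_mul L).const_sub 1
        refine h3.congr_deriv ?_
        ring
      exact h2.ofReal_comp
    have hA : HasDerivAt a (1/ω) τ := by
      rw [ha]; simpa using ((hasDerivAt_id τ).sub_const t).div_const ω
    have hψad : HasDerivAt (fun τ => ψ (a τ)) ((1/ω : ℝ) • deriv ψ (a τ)) τ :=
      HasDerivAt.scomp τ (hdψ (a τ)) hA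
    have hed : HasDerivAt e (-(Complex.I * L) * e τ) τ := by
      have h0 : HasDerivAt (fun τ : ℝ => L * (τ - t)) L τ := by
        simpa using ((hasDerivAt_id τ).sub_const t).const_mul L
      have h1 : HasDerivAt (fun τ : ℝ => ((L * (τ - t) : ℝ) : ℂ)) (L : ℂ) τ := h0.ofReal_comp
      have h2 := ((h1.const_mul Complex.I).neg).cexp
      rw [he]
      refine h2.congr_deriv ?_
      exact mul_comm _ _
    have h5 := (hrd.mul hψad).mul hed
    refine h5.congr_deriv ?_
    rw [hG₁, hG₂, hF]
    simp only [Pi.mul_apply]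
    ring
  -- F tends to zero at ±∞
  have hψtop : Tendsto ψ atTop (nhds 0) := by
    have htop : IntegrableOn (deriv ψ) (Ioi 1) := by
      refine (hI2.integrableOn.norm.mono' hψ'c.aestronglyMeasurable.restrict ?_)
      filter_upwards [ae_restrict_mem measurableSet_Ioi] with x hx
      have h1 : (1:ℝ) ≤ |x| := by rw [abs_of_pos (lt_trans one_pos hx)]; exact hx.le
      calc ‖deriv ψ x‖ ≤ |x| * ‖deriv ψ x‖ := le_mul_of_one_le_left (norm_nonneg _) h1
      _ = ‖(x:ℂ) * deriv ψ x‖ := by rw [norm_mul, Complex.norm_real, Real.norm_eq_abs]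
    exact tendsto_zero_of_hasDerivAt_of_integrableOn_Ioi (fun x _ => hdψ x) htop hI1.integrableOn
  have hψbot : Tendsto ψ atBot (nhds 0) := by
    have hbot : IntegrableOn (deriv ψ) (Iic (-1)) := by
      refine (hI2.integrableOn.norm.mono' hψ'c.aestronglyMeasurable.restrict ?_)
      filter_upwards [ae_restrict_mem measurableSet_Iic] with x hx
      have h1 : (1:ℝ) ≤ |x| := by
        rw [abs_of_neg (lt_of_le_of_lt hx (by norm_num))]; linarith [hx.out]
      calc ‖deriv ψ x‖ ≤ |x| * ‖deriv ψ x‖ := le_mul_of_one_le_left (norm_nonneg _) h1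
      _ = ‖(x:ℂ) * deriv ψ x‖ := by rw [norm_mul, Complex.norm_real, Real.norm_eq_abs]
    exact tendsto_zero_of_hasDerivAt_of_integrableOn_Iic (fun x _ => hdψ x) hbot hI1.integrableOn
  have haTop : Tendsto a atTop atTop := by
    apply Tendsto.atTop_div_const hω
    simpa [sub_eq_add_neg] using tendsto_atTop_add_const_right atTop (-t) tendsto_id
  have haBot : Tendsto a atBot atBot := by
    apply Tendsto.atBot_div_const hω
    simpa [sub_eq_add_neg] using tendsto_atBot_add_const_right atBot (-t) tendsto_id
  have hFbound : ∀ τ, ‖F τ‖ ≤ (1 + L / c) * ‖ψ (a τ)‖ := by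
    intro τ
    rw [hFnorm τ]
    exact mul_le_mul_of_nonneg_right (hrb2 τ) (norm_nonneg _)
  have hFtop : Tendsto F atTop (nhds 0) := by
    refine squeeze_zero_norm hFbound ?_
    have h6 := ((hψtop.comp haTop).norm.const_mul (1 + L / c))
    simpa using h6
  have hFbot : Tendsto F atBot (nhds 0) := by
    refine squeeze_zero_norm hFbound ?_
    have h6 := ((hψbot.comp haBot).norm.const_mul (1 + L / c))
    simpa using h6
  -- ∫ F' = 0
  have hGi : Integrable (fun τ => G₁ τ + G₂ τ) := hG₁i.add hG₂i
  have hILFi : Integrable (fun τ => Complex.I * L * F τ) := hFi.const_mul _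
  have hF'i : Integrable (fun τ => G₁ τ + G₂ τ - Complex.I * L * F τ) := hGi.sub hILFi
  have hkey : ∫ τ, (G₁ τ + G₂ τ - Complex.I * L * F τ) = 0 := by
    rw [← intervalIntegral.integral_Iic_add_Ioi (b := t) hF'i.integrableOn hF'i.integrableOn]
    rw [integral_Iic_of_hasDerivAt_of_tendsto' (fun x _ => hder x) hF'i.integrableOn hFbot]
    rw [integral_Ioi_of_hasDerivAt_of_tendsto' (fun x _ => hder x) hF'i.integrableOn hFtop]
    ring
  have hsplit : Complex.I * L * ∫ τ, F τ = (∫ τ, G₁ τ) + ∫ τ, G₂ τ := by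
    have h1 : ∫ τ, (G₁ τ + G₂ τ - Complex.I * L * F τ)
        = (∫ τ, (G₁ τ + G₂ τ)) - ∫ τ, Complex.I * L * F τ := integral_sub hGi hILFi
    rw [h1, integral_add hG₁i hG₂i, integral_const_mul] at hkey
    linear_combination -hkey
  -- change of variables computations
  have cv1 : ∫ τ, ‖ψ (a τ)‖ = ω * ∫ u : ℝ, ‖ψ u‖ := by
    calc ∫ τ, ‖ψ (a τ)‖ = ∫ x, ‖ψ (x/ω)‖ :=
      integral_sub_right_eq_self (fun x => ‖ψ (x/ω)‖) t
    _ = |ω| • ∫ x, ‖ψ x‖ := Measure.integral_comp_div (fun x => ‖ψ x‖) ω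
    _ = ω * ∫ x, ‖ψ x‖ := by rw [abs_of_pos hω, smul_eq_mul]
  have cv2 : ∫ τ, ‖((a τ : ℝ) : ℂ) * deriv ψ (a τ)‖
      = ω * ∫ u : ℝ, ‖(u:ℂ) * deriv ψ u‖ := by
    calc ∫ τ, ‖((a τ : ℝ) : ℂ) * deriv ψ (a τ)‖
        = ∫ x, ‖((x/ω : ℝ) : ℂ) * deriv ψ (x/ω)‖ :=
      integral_sub_right_eq_self (fun x => ‖((x/ω : ℝ) : ℂ) * deriv ψ (x/ω)‖) t
    _ = |ω| • ∫ x : ℝ, ‖(x:ℂ) * deriv ψ x‖ :=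
      Measure.integral_comp_div (fun x : ℝ => ‖(x:ℂ) * deriv ψ x‖) ω
    _ = ω * ∫ x : ℝ, ‖(x:ℂ) * deriv ψ x‖ := by rw [abs_of_pos hω, smul_eq_mul]
  -- norm bounds on the integrals of G₁, G₂
  have hbG₁ : ‖∫ τ, G₁ τ‖ ≤ L * ε * (ω * ∫ u : ℝ, ‖ψ u‖) := by
    refine (norm_integral_le_integral_norm _).trans ?_
    have hle : ∫ τ, ‖G₁ τ‖ ≤ ∫ τ, (L * ε) * ‖ψ (a τ)‖ := by
      refine integral_mono hG₁i.norm (hψa.norm.const_mul _) ?_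
      intro τ
      exact hG₁b τ
    refine hle.trans (le_of_eq ?_)
    rw [integral_const_mul, cv1]
  have hbG₂ : ‖∫ τ, G₂ τ‖ ≤ L * ε * (ω * ∫ u : ℝ, ‖(u:ℂ) * deriv ψ u‖) := by
    refine (norm_integral_le_integral_norm _).trans ?_
    have hle : ∫ τ, ‖G₂ τ‖ ≤ ∫ τ, (L * ε) * ‖((a τ : ℝ) : ℂ) * deriv ψ (a τ)‖ :=
      integral_mono hG₂i.norm (hha.norm.const_mul _) (fun τ => hG₂b τ)
    refine hle.trans (le_of_eq ?_)
    rw [integral_const_mul, cv2]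
  -- conclusion
  have hmain : L * ‖∫ τ, F τ‖
      ≤ L * (ω * ((∫ u : ℝ, ‖ψ u‖) + ∫ u : ℝ, ‖(u:ℂ) * deriv ψ u‖) * ε) := by
    have h1 : L * ‖∫ τ, F τ‖ = ‖Complex.I * L * ∫ τ, F τ‖ := by
      rw [norm_mul, norm_mul, Complex.norm_I, Complex.norm_real, Real.norm_eq_abs,
        abs_of_pos hL, one_mul]
    rw [h1, hsplit]
    calc ‖(∫ τ, G₁ τ) + ∫ τ, G₂ τ‖ ≤ ‖∫ τ, G₁ τ‖ + ‖∫ τ, G₂ τ‖ := norm_add_le _ _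
    _ ≤ L * ε * (ω * ∫ u : ℝ, ‖ψ u‖) + L * ε * (ω * ∫ u : ℝ, ‖(u:ℂ) * deriv ψ u‖) :=
      add_le_add hbG₁ hbG₂
    _ = L * (ω * ((∫ u : ℝ, ‖ψ u‖) + ∫ u : ℝ, ‖(u:ℂ) * deriv ψ u‖) * ε) := by ring
  have hfin : ‖∫ τ, F τ‖ ≤ ω * ((∫ u : ℝ, ‖ψ u‖) + ∫ u : ℝ, ‖(u:ℂ) * deriv ψ u‖) * ε :=
    le_of_mul_le_mul_left hmain hL
  -- translate to the statement
  have hgoal : (∫ τ : ℝ, ((1 - deriv θ t / deriv θ τ : ℝ) : ℂ) * ψ ((τ - t) / ω) *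
      Complex.exp (-(Complex.I * ((deriv θ t * (τ - t) : ℝ) : ℂ)))) = ∫ τ, F τ := rfl
  rw [hgoal]
  exact hfin
end

section
/- Let ψ: ℝ → ℂ be a C² wavelet function with I₂ = ∫_ℝ |τ ψ'(τ)| dτ < ∞ and I₃ = ∫_ℝ |τ² ψ''(τ)| dτ < ∞, and let θ ∈ C²(ℝ) with θ' > 0, inf θ' > 0, |θ''(t)/(θ'(t))²| ≤ ε for all t, and sup θ'/inf θ' = M' < +∞. Define Δθ(τ, t) = θ(τ) − θ(t) − θ'(t)(τ − t) and g₂(τ, t) = (1/θ'(τ)) (1 − e^{iΔθ(τ,t)}) (1/ω) ψ'((τ − t)/ω). Then for every t ∈ ℝ and ω > 0, | ∫_ℝ g₂(τ, t) e^{−iθ(τ)} dτ | ≤ M' ω (I₂ + I₃) ε. -/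
open Real MeasureTheory Filter Set Topology

/-- `|1 - e^{ix}| ≤ |x|` for real `x`. -/
lemma aux_abs_one_sub_exp (x : ℝ) : ‖1 - Complex.exp (Complex.I * x)‖ ≤ |x| := by
  have h1 : Complex.exp (Complex.I * x) = Real.cos x + Real.sin x * Complex.I := by
    rw [mul_comm, Complex.exp_mul_I]; norm_cast
  have h2 : (1 : ℂ) - (Real.cos x + Real.sin x * Complex.I)
      = Complex.ofReal (1 - Real.cos x) + Complex.ofReal (- Real.sin x) * Complex.I := by
    push_cast; ring
  rw [h1, h2, Complex.norm_def, Complex.normSq_add_mul_I]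
  have h3 : (1 - Real.cos x) ^ 2 + (-Real.sin x) ^ 2 = 2 - 2 * Real.cos x := by
    have := Real.sin_sq_add_cos_sq x; nlinarith
  rw [h3]
  have h4 : 2 - 2 * Real.cos x ≤ x ^ 2 := by
    have := Real.one_sub_sq_div_two_le_cos (x := x); nlinarith
  calc Real.sqrt (2 - 2 * Real.cos x) ≤ Real.sqrt (x ^ 2) := Real.sqrt_le_sqrt h4
    _ = |x| := Real.sqrt_sq_eq_abs x

lemma aux_I_identity (x y a b : ℂ) :
    Complex.I * (x * -(Complex.I * a) - y * -(Complex.I * b)) = a * x - b * y := by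
  linear_combination (-(a * x - b * y)) * Complex.I_sq

lemma aux_integral_deriv_eq_zero {f f' : ℝ → ℂ} (hd : ∀ x, HasDerivAt f (f' x) x)
    (hi : Integrable f') (hb : Tendsto f atBot (𝓝 0)) (ht : Tendsto f atTop (𝓝 0)) :
    ∫ x, f' x = 0 := by
  have h1 : ∫ x in Iic (0:ℝ), f' x = f 0 - 0 :=
    integral_Iic_of_hasDerivAt_of_tendsto' (fun x _ => hd x) hi.integrableOn hb
  have h2 : ∫ x in Ioi (0:ℝ), f' x = 0 - f 0 :=
    integral_Ioi_of_hasDerivAt_of_tendsto' (fun x _ => hd x) hi.integrableOn ht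
  rw [← intervalIntegral.integral_Iic_add_Ioi hi.integrableOn hi.integrableOn, h1, h2]; ring

lemma aux_lim_zero_top {g : ℝ → ℂ} (h1 : Integrable (fun x : ℝ => (x : ℂ) * g x))
    {L : ℂ} (hL : Tendsto g atTop (𝓝 L)) : L = 0 := by
  by_contra hL0
  have hnL : (0:ℝ) < ‖L‖ := by simpa using hL0
  have hgev : ∀ᶠ x in atTop, ‖L‖ / 2 ≤ ‖g x‖ :=
    hL.norm.eventually_const_le (by linarith)
  obtain ⟨T, hT⟩ := eventually_atTop.mp hgev
  set T' : ℝ := max T (2 / ‖L‖) with hT'def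
  have key : IntegrableOn (fun _ : ℝ => (1:ℝ)) (Ioi T') volume := by
    refine Integrable.mono (h1.restrict (s := Ioi T')) aestronglyMeasurable_const ?_
    refine (ae_restrict_iff' measurableSet_Ioi).2 (ae_of_all _ fun x hx => ?_)
    have hx1 : T ≤ x := le_trans (le_max_left _ _) (le_of_lt hx)
    have hx2 : 2 / ‖L‖ ≤ x := le_trans (le_max_right _ _) (le_of_lt hx)
    have hx0 : 0 < x := lt_of_lt_of_le (by positivity) hx2
    have : ‖(x:ℂ) * g x‖ = |x| * ‖g x‖ := by
      rw [norm_mul, Complex.norm_real, Real.norm_eq_abs]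
    rw [this, abs_of_pos hx0]
    have h3 : (2 / ‖L‖) * (‖L‖ / 2) ≤ x * ‖g x‖ :=
      mul_le_mul hx2 (hT x hx1) (by positivity) (le_of_lt hx0)
    have h4 : (2 / ‖L‖) * (‖L‖ / 2) = 1 := by
      rw [div_mul_div_comm]
      rw [div_eq_one_iff_eq (by positivity)]
      ring
    simp only [norm_one]
    linarith [h3, h4 ▸ h3]
  rw [integrableOn_const_iff] at key
  rcases key with h | h
  · norm_num at h
  · rw [Real.volume_Ioi] at h; exact absurd h (by simp)

lemma aux_tendsto_of_deriv {g g' : ℝ → ℂ} (hd : ∀ x, HasDerivAt g (g' x) x)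
    (hc : Continuous g') (hi : IntegrableOn g' (Ioi 1)) :
    Tendsto g atTop (𝓝 (g 1 + ∫ x in Ioi 1, g' x)) := by
  have h0 : Tendsto (fun x => ∫ s in (1:ℝ)..x, g' s) atTop (𝓝 (∫ x in Ioi 1, g' x)) :=
    intervalIntegral_tendsto_integral_Ioi 1 hi tendsto_id
  have h2 := tendsto_const_nhds.add h0 (f := fun _ : ℝ => g 1) (x := atTop)
  refine h2.congr fun x => ?_
  rw [intervalIntegral.integral_eq_sub_of_hasDerivAt (fun s _ => hd s)
    (hc.intervalIntegrable 1 x)]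
  ring

lemma aux_deriv_tendsto_zero {F F' : ℝ → ℂ} (hd : ∀ x, HasDerivAt F (F' x) x)
    (hcF' : Continuous F')
    (h1 : Integrable (fun x : ℝ => (x:ℂ) * F x))
    (h2 : Integrable (fun x : ℝ => (x:ℂ)^2 * F' x)) :
    Tendsto F atTop (𝓝 0) := by
  have hi : IntegrableOn F' (Ioi 1) := by
    refine Integrable.mono (h2.restrict (s := Ioi 1)) (hcF'.aestronglyMeasurable.restrict) ?_
    refine (ae_restrict_iff' measurableSet_Ioi).2 (ae_of_all _ fun x hx => ?_)
    have hx1 : (1:ℝ) ≤ x := le_of_lt hx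
    have : ‖(x:ℂ)^2 * F' x‖ = x^2 * ‖F' x‖ := by
      rw [norm_mul, norm_pow, Complex.norm_real, Real.norm_eq_abs, sq_abs]
    rw [this]
    nlinarith [mul_nonneg (by nlinarith : (0:ℝ) ≤ x^2 - 1) (norm_nonneg (F' x))]
  have hten := aux_tendsto_of_deriv hd hcF' hi
  have := aux_lim_zero_top h1 hten
  rwa [this] at hten

lemma aux_deriv_tendsto_zero_bot {F F' : ℝ → ℂ} (hd : ∀ x, HasDerivAt F (F' x) x)
    (hcF' : Continuous F')
    (h1 : Integrable (fun x : ℝ => (x:ℂ) * F x))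
    (h2 : Integrable (fun x : ℝ => (x:ℂ)^2 * F' x)) :
    Tendsto F atBot (𝓝 0) := by
  set G : ℝ → ℂ := fun x => F (-x) with hG
  set G' : ℝ → ℂ := fun x => -F' (-x) with hG'
  have hdG : ∀ x, HasDerivAt G (G' x) x := by
    intro x
    have := HasDerivAt.scomp x (hd (-x)) (hasDerivAt_neg x)
    simpa [hG, hG', Function.comp_def] using this
  have hcG' : Continuous G' := (hcF'.comp continuous_neg).neg
  have h1' : Integrable (fun x : ℝ => (x:ℂ) * G x) := by
    have h := (h1.comp_mul_left' (R := (-1:ℝ)) (by norm_num)).neg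
    refine h.congr (ae_of_all _ fun x => ?_)
    simp only [hG, Pi.neg_apply, neg_one_mul]
    push_cast
    ring
  have h2' : Integrable (fun x : ℝ => (x:ℂ)^2 * G' x) := by
    have h := (h2.comp_mul_left' (R := (-1:ℝ)) (by norm_num)).neg
    refine h.congr (ae_of_all _ fun x => ?_)
    simp only [hG', Pi.neg_apply, neg_one_mul]
    push_cast
    ring
  have hGtop : Tendsto G atTop (𝓝 0) := aux_deriv_tendsto_zero hdG hcG' h1' h2'
  have : Tendsto (fun x => G (-x)) atBot (𝓝 0) := hGtop.comp tendsto_neg_atBot_atTop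
  refine this.congr fun x => ?_
  simp [hG]

set_option maxHeartbeats 1600000 in
/-- For a `C²` wavelet `ψ` with `I₂ = ∫|τψ'| < ∞`, `I₃ = ∫|τ²ψ''| < ∞`,
and a phase `θ ∈ C²(ℝ)` with `θ' > 0`, `inf θ' > 0`, `|θ''/(θ')²| ≤ ε`, and
`sup θ'/inf θ' ≤ M'`, setting `Δθ(τ,t) = θ(τ) − θ(t) − θ'(t)(τ−t)` and
`g₂(τ,t) = (1/θ'(τ)) (1 − e^{iΔθ(τ,t)}) (1/ω) ψ'((τ−t)/ω)`, one has, for every `t`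
and `ω > 0`, `|∫ g₂(τ,t) e^{−iθ(τ)} dτ| ≤ M' ω (I₂ + I₃) ε`. -/
theorem wavelet_g2_bound (ε M' : ℝ) (ψ : ℝ → ℂ) (θ : ℝ → ℝ)
    (hψ : ContDiff ℝ 2 ψ)
    (hI2 : Integrable (fun τ : ℝ => (τ : ℂ) * deriv ψ τ))
    (hI3 : Integrable (fun τ : ℝ => (τ : ℂ) ^ 2 * deriv (deriv ψ) τ))
    (hθ : ContDiff ℝ 2 θ)
    (hpos : ∀ t, 0 < deriv θ t)
    (hinf : ∃ c > 0, ∀ t : ℝ, c ≤ deriv θ t)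
    (hosc : ∀ t, |deriv (deriv θ) t / (deriv θ t) ^ 2| ≤ ε)
    (hM : ∀ s t : ℝ, deriv θ s ≤ M' * deriv θ t)
    (t ω : ℝ) (hω : 0 < ω) :
    ‖∫ τ : ℝ,
        ((deriv θ τ : ℝ) : ℂ)⁻¹ *
          (1 - Complex.exp (Complex.I * ((θ τ - θ t - deriv θ t * (τ - t) : ℝ) : ℂ))) *
          ((ω : ℝ) : ℂ)⁻¹ * deriv ψ ((τ - t) / ω) *
          Complex.exp (-(Complex.I * (θ τ : ℂ)))‖ ≤
      M' * ω * ((∫ τ : ℝ, ‖(τ : ℂ) * deriv ψ τ‖) +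
          (∫ τ : ℝ, ‖(τ : ℂ) ^ 2 * deriv (deriv ψ) τ‖)) * ε := by
  obtain ⟨c, hc0, hcle⟩ := hinf
  have hM1 : 1 ≤ M' := by nlinarith [hM t t, hpos t]
  have hε0 : 0 ≤ ε := le_trans (abs_nonneg _) (hosc 0)
  have hpt := hpos t
  -- differentiability facts
  have hθ2 : ContDiff ℝ (1 + 1) θ := by norm_num at hθ ⊢; exact hθ
  have hθ1 : ContDiff ℝ 1 (deriv θ) := (contDiff_succ_iff_deriv.mp hθ2).2.2
  have hθd : ∀ x, HasDerivAt θ (deriv θ x) x :=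
    fun x => (hθ2.differentiable (by norm_num) x).hasDerivAt
  have hpd : ∀ x, HasDerivAt (deriv θ) (deriv (deriv θ) x) x :=
    fun x => ((hθ1.differentiable one_ne_zero) x).hasDerivAt
  have hpcont : Continuous (deriv θ) := hθ1.continuous
  have hqcont : Continuous (deriv (deriv θ)) := hθ1.continuous_deriv le_rfl
  have hψ2 : ContDiff ℝ (1 + 1) ψ := by norm_num at hψ ⊢; exact hψ
  have hψ1 : ContDiff ℝ 1 (deriv ψ) := (contDiff_succ_iff_deriv.mp hψ2).2.2
  have hψd : ∀ x, HasDerivAt (deriv ψ) (deriv (deriv ψ) x) x :=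
    fun x => ((hψ1.differentiable one_ne_zero) x).hasDerivAt
  have hψ'cont : Continuous (deriv ψ) := hψ1.continuous
  have hψ''cont : Continuous (deriv (deriv ψ)) := hψ1.continuous_deriv le_rfl
  -- |θ''| ≤ ε θ'²
  have hqb : ∀ s, |deriv (deriv θ) s| ≤ ε * (deriv θ s)^2 := by
    intro s
    have h := hosc s
    rw [abs_div, abs_pow, sq_abs, div_le_iff₀ (pow_pos (hpos s) 2)] at h
    linarith
  -- 1/θ' is ε-Lipschitz
  have hLip : ∀ a b : ℝ, |(deriv θ a)⁻¹ - (deriv θ b)⁻¹| ≤ ε * |a - b| := by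
    intro a b
    have hder : ∀ x, HasDerivAt (fun y => (deriv θ y)⁻¹)
        (-(deriv (deriv θ) x) / (deriv θ x)^2) x :=
      fun x => (hpd x).inv (ne_of_gt (hpos x))
    have := Convex.norm_image_sub_le_of_norm_hasDerivWithin_le
      (f := fun y => (deriv θ y)⁻¹) (f' := fun x => -(deriv (deriv θ) x) / (deriv θ x)^2)
      (s := univ) (C := ε)
      (fun x _ => (hder x).hasDerivWithinAt) (fun x _ => by
        rw [Real.norm_eq_abs, abs_div, abs_neg, abs_pow, sq_abs,
          div_le_iff₀ (pow_pos (hpos x) 2)]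
        nlinarith [hqb x, pow_pos (hpos x) 2]) convex_univ (mem_univ b) (mem_univ a)
    simpa [Real.norm_eq_abs] using this
  -- the Taylor remainder Δ and its bounds
  set Δ : ℝ → ℝ := fun τ => θ τ - θ t - deriv θ t * (τ - t) with hΔdef
  have hΔd : ∀ x, HasDerivAt Δ (deriv θ x - deriv θ t) x := by
    intro x
    have h1 := (hθd x).sub_const (θ t)
    have h2 := ((hasDerivAt_id x).sub_const t).const_mul (deriv θ t)
    have := h1.sub h2; simp only [mul_one] at this; exact this
  have hΔt : Δ t = 0 := by simp [hΔdef]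
  have hpdiff : ∀ s, |deriv θ s - deriv θ t| ≤ (M' - 1) * deriv θ t := by
    intro s
    have h1 := hM s t; have h2 := hM t s
    have h3 := hpos s
    rw [abs_le]
    constructor
    · nlinarith [sq_nonneg (M' - 1)]
    · nlinarith
  have hB1 : ∀ τ, |Δ τ| ≤ (M' - 1) * deriv θ t * |τ - t| := by
    intro τ
    have := Convex.norm_image_sub_le_of_norm_hasDerivWithin_le
      (f := Δ) (f' := fun x => deriv θ x - deriv θ t) (s := univ)
      (C := (M' - 1) * deriv θ t)
      (fun x _ => (hΔd x).hasDerivWithinAt)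
      (fun x _ => by rw [Real.norm_eq_abs]; exact hpdiff x)
      convex_univ (mem_univ t) (mem_univ τ)
    rw [hΔt, sub_zero, Real.norm_eq_abs, Real.norm_eq_abs] at this
    exact this
  have hB2 : ∀ τ, |Δ τ| ≤ ε * M' * deriv θ τ * deriv θ t * (τ - t)^2 := by
    intro τ
    have hbound : ∀ s ∈ segment ℝ t τ,
        ‖deriv θ s - deriv θ t‖ ≤ ε * M' * deriv θ τ * deriv θ t * |τ - t| := by
      rintro s hs
      obtain ⟨a, b, ha, hb, hab, rfl⟩ := hs
      have hst : |a • t + b • τ - t| ≤ |τ - t| := by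
        have he : a • t + b • τ - t = b * (τ - t) := by
          simp only [smul_eq_mul]
          have : a = 1 - b := by linarith
          rw [this]; ring
        rw [he, abs_mul, abs_of_nonneg hb]
        nlinarith [abs_nonneg (τ - t)]
      set s : ℝ := a • t + b • τ
      have hps := hpos s
      have hpp : (0:ℝ) < deriv θ s * deriv θ t := mul_pos hps hpt
      have he1 : (deriv θ s * deriv θ t) * ((deriv θ s)⁻¹ - (deriv θ t)⁻¹)
          = deriv θ t - deriv θ s := by
        field_simp
      have key : |deriv θ s - deriv θ t|
          = (deriv θ s * deriv θ t) * |(deriv θ s)⁻¹ - (deriv θ t)⁻¹| := by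
        rw [abs_sub_comm, ← he1, abs_mul, abs_of_pos hpp]
      rw [Real.norm_eq_abs, key]
      calc (deriv θ s * deriv θ t) * |(deriv θ s)⁻¹ - (deriv θ t)⁻¹|
          ≤ (deriv θ s * deriv θ t) * (ε * |s - t|) :=
            mul_le_mul_of_nonneg_left (hLip s t) (le_of_lt hpp)
        _ ≤ ((M' * deriv θ τ) * deriv θ t) * (ε * |τ - t|) := by
            apply mul_le_mul
            · exact mul_le_mul_of_nonneg_right (hM s τ) (le_of_lt hpt)
            · exact mul_le_mul_of_nonneg_left hst hε0
            · exact mul_nonneg hε0 (abs_nonneg _)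
            · exact mul_nonneg (mul_nonneg (by linarith : (0:ℝ) ≤ M') (le_of_lt (hpos τ))) (le_of_lt hpt)
        _ = ε * M' * deriv θ τ * deriv θ t * |τ - t| := by ring
    have := Convex.norm_image_sub_le_of_norm_hasDerivWithin_le
      (f := Δ) (f' := fun x => deriv θ x - deriv θ t) (s := segment ℝ t τ)
      (C := ε * M' * deriv θ τ * deriv θ t * |τ - t|)
      (fun x hx => (hΔd x).hasDerivWithinAt)
      (fun x hx => hbound x hx)
      (convex_segment t τ) (left_mem_segment ℝ t τ) (right_mem_segment ℝ t τ)
    rw [hΔt, sub_zero, Real.norm_eq_abs, Real.norm_eq_abs] at this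
    calc |Δ τ| ≤ ε * M' * deriv θ τ * deriv θ t * |τ - t| * |τ - t| := this
      _ = ε * M' * deriv θ τ * deriv θ t * (τ - t)^2 := by
          rw [mul_assoc, abs_mul_abs_self]; ring
  -- switch from Complex.abs to norms
  -- complex exponentials and auxiliary functions
  set E1 : ℝ → ℂ := fun τ => Complex.exp (-(Complex.I * (θ τ : ℂ))) with hE1def
  set E2 : ℝ → ℂ :=
    fun τ => Complex.exp (-(Complex.I * ((θ t + deriv θ t * (τ - t) : ℝ) : ℂ))) with hE2def
  set NN : ℝ → ℂ := fun τ => E1 τ - E2 τ with hNNdef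
  set hh : ℝ → ℂ := fun τ => ((ω : ℝ) : ℂ)⁻¹ * deriv ψ ((τ - t) / ω) with hhdef
  set hd' : ℝ → ℂ :=
    fun τ => ((ω : ℝ) : ℂ)⁻¹ * ((1/ω : ℝ) • deriv (deriv ψ) ((τ - t) / ω)) with hd'def
  set W : ℝ → ℂ :=
    fun τ => Complex.I * NN τ * ((deriv θ τ : ℝ) : ℂ)⁻¹ * ((deriv θ t : ℝ) : ℂ)⁻¹ with hWdef
  set Wd : ℝ → ℂ := fun τ =>
    (Complex.I * (E1 τ * -(Complex.I * ((deriv θ τ : ℝ) : ℂ))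
        - E2 τ * -(Complex.I * ((deriv θ t : ℝ) : ℂ))) * ((deriv θ τ : ℝ) : ℂ)⁻¹
      + Complex.I * NN τ *
        (-((deriv (deriv θ) τ : ℝ) : ℂ) / ((deriv θ τ : ℝ) : ℂ) ^ 2)) *
      ((deriv θ t : ℝ) : ℂ)⁻¹ with hWddef
  set R : ℝ → ℂ := fun τ =>
    E1 τ * (((deriv θ τ : ℝ) : ℂ)⁻¹ - ((deriv θ t : ℝ) : ℂ)⁻¹)
      + Complex.I * NN τ * ((deriv (deriv θ) τ : ℝ) : ℂ) *
        (((deriv θ τ : ℝ) : ℂ)⁻¹) ^ 2 * ((deriv θ t : ℝ) : ℂ)⁻¹ with hRdef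
  have hane : ∀ τ : ℝ, ((deriv θ τ : ℝ) : ℂ) ≠ 0 :=
    fun τ => Complex.ofReal_ne_zero.mpr (ne_of_gt (hpos τ))
  have hbne : ((deriv θ t : ℝ) : ℂ) ≠ 0 := hane t
  -- derivatives of the complex pieces
  have hE1d : ∀ τ, HasDerivAt E1 (E1 τ * -(Complex.I * ((deriv θ τ : ℝ) : ℂ))) τ := by
    intro τ
    have h0 : HasDerivAt (fun x : ℝ => ((θ x : ℝ) : ℂ)) ((deriv θ τ : ℝ) : ℂ) τ :=
      (hθd τ).ofReal_comp
    exact ((h0.const_mul Complex.I).neg).cexp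
  have hE2d : ∀ τ, HasDerivAt E2 (E2 τ * -(Complex.I * ((deriv θ t : ℝ) : ℂ))) τ := by
    intro τ
    have hr : HasDerivAt (fun x : ℝ => θ t + deriv θ t * (x - t)) (deriv θ t) τ := by
      have h := (((hasDerivAt_id τ).sub_const t).const_mul (deriv θ t)).const_add (θ t)
      simpa using h
    exact ((hr.ofReal_comp.const_mul Complex.I).neg).cexp
  have hNNd : ∀ τ, HasDerivAt NN
      (E1 τ * -(Complex.I * ((deriv θ τ : ℝ) : ℂ))
        - E2 τ * -(Complex.I * ((deriv θ t : ℝ) : ℂ))) τ :=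
    fun τ => (hE1d τ).sub (hE2d τ)
  have hinvd : ∀ τ, HasDerivAt (fun x => ((deriv θ x : ℝ) : ℂ)⁻¹)
      (-((deriv (deriv θ) τ : ℝ) : ℂ) / ((deriv θ τ : ℝ) : ℂ) ^ 2) τ :=
    fun τ => by
      have h0 : HasDerivAt (fun x => (deriv θ x)⁻¹)
          (-(deriv (deriv θ) τ) / (deriv θ τ) ^ 2) τ := (hpd τ).inv (ne_of_gt (hpos τ))
      have h1 := h0.ofReal_comp
      push_cast at h1
      exact h1
  have hWderiv : ∀ τ, HasDerivAt W (Wd τ) τ := by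
    intro τ
    have h1 := (((hNNd τ).const_mul Complex.I).mul (hinvd τ)).mul_const
      (((deriv θ t : ℝ) : ℂ)⁻¹)
    exact h1
  have hud : ∀ τ : ℝ, HasDerivAt (fun x : ℝ => (x - t)/ω) (1/ω) τ := by
    intro τ
    simpa using ((hasDerivAt_id τ).sub_const t).div_const ω
  have hhderiv : ∀ τ, HasDerivAt hh (hd' τ) τ := by
    intro τ
    have h0 := HasDerivAt.scomp τ (hψd ((τ - t)/ω)) (hud τ)
    exact h0.const_mul _
  -- norms of exponentials
  have hE1n : ∀ τ, ‖E1 τ‖ = 1 := by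
    intro τ
    simp [hE1def, Complex.norm_exp]
  have hE2n : ∀ τ, ‖E2 τ‖ = 1 := by
    intro τ
    simp [hE2def, Complex.norm_exp]
  have hNneq : ∀ τ, (1 - Complex.exp (Complex.I * ((Δ τ : ℝ) : ℂ))) * E1 τ = NN τ := by
    intro τ
    have harg : Complex.I * ((Δ τ : ℝ) : ℂ) + -(Complex.I * ((θ τ : ℝ) : ℂ))
        = -(Complex.I * ((θ t + deriv θ t * (τ - t) : ℝ) : ℂ)) := by
      simp only [hΔdef]; push_cast; ring
    simp only [hNNdef, hE1def, hE2def]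
    rw [sub_mul, one_mul, ← Complex.exp_add, harg]
  have hNn1 : ∀ τ, ‖NN τ‖ ≤ |Δ τ| := by
    intro τ
    rw [← hNneq τ, norm_mul, hE1n τ, mul_one]
    exact aux_abs_one_sub_exp (Δ τ)
  have hNn2 : ∀ τ, ‖NN τ‖ ≤ 2 := by
    intro τ
    simp only [hNNdef]
    calc ‖E1 τ - E2 τ‖ ≤ ‖E1 τ‖ + ‖E2 τ‖ := norm_sub_le _ _
      _ = 2 := by rw [hE1n τ, hE2n τ]; norm_num
  -- continuity
  have hca : Continuous (fun τ : ℝ => ((deriv θ τ : ℝ) : ℂ)) :=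
    Complex.continuous_ofReal.comp hpcont
  have hcq : Continuous (fun τ : ℝ => ((deriv (deriv θ) τ : ℝ) : ℂ)) :=
    Complex.continuous_ofReal.comp hqcont
  have hcinv : Continuous (fun τ : ℝ => ((deriv θ τ : ℝ) : ℂ)⁻¹) := hca.inv₀ hane
  have hcu : Continuous (fun τ : ℝ => (τ - t)/ω) := by fun_prop
  have hcψu : Continuous (fun τ : ℝ => deriv ψ ((τ - t)/ω)) := hψ'cont.comp hcu
  have hcψ''u : Continuous (fun τ : ℝ => deriv (deriv ψ) ((τ - t)/ω)) := hψ''cont.comp hcu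
  have hcE1 : Continuous E1 := by
    simp only [hE1def]
    exact Complex.continuous_exp.comp
      ((continuous_const.mul (Complex.continuous_ofReal.comp hθ2.continuous)).neg)
  have hcE2 : Continuous E2 := by
    simp only [hE2def]
    have : Continuous (fun τ : ℝ => θ t + deriv θ t * (τ - t)) := by fun_prop
    exact Complex.continuous_exp.comp
      ((continuous_const.mul (Complex.continuous_ofReal.comp this)).neg)
  have hcNN : Continuous NN := by
    simp only [hNNdef]; exact hcE1.sub hcE2
  have hchh : Continuous hh := by
    simp only [hhdef]; exact continuous_const.mul hcψu
  have hchd' : Continuous hd' := by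
    simp only [hd'def]; exact continuous_const.mul (hcψ''u.const_smul (1/ω) :
      Continuous fun τ : ℝ => (1/ω : ℝ) • deriv (deriv ψ) ((τ - t) / ω))
  have hcW : Continuous W := by
    simp only [hWdef]
    exact (((continuous_const.mul hcNN).mul hcinv).mul continuous_const)
  have hcWd : Continuous Wd := by
    simp only [hWddef]
    refine Continuous.mul ?_ continuous_const
    refine Continuous.add ?_ ?_
    · exact (continuous_const.mul ((hcE1.mul ((continuous_const.mul hca).neg)).sub
        (hcE2.mul continuous_const))).mul hcinv
    · exact (continuous_const.mul hcNN).mul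
        ((hcq.neg).div (hca.pow 2) (fun τ => pow_ne_zero 2 (hane τ)))
  have hcR : Continuous R := by
    simp only [hRdef]
    exact (hcE1.mul (hcinv.sub continuous_const)).add
      ((((continuous_const.mul hcNN).mul hcq).mul (hcinv.pow 2)).mul continuous_const)
  -- the bound functions and change of variables
  set g2 : ℝ → ℝ := fun y => ‖(y : ℂ) * deriv ψ y‖ with hg2def
  set g3 : ℝ → ℝ := fun y => ‖(y : ℂ) ^ 2 * deriv (deriv ψ) y‖ with hg3def
  have hg2i : Integrable g2 := hI2.norm
  have hg3i : Integrable g3 := hI3.norm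
  have hg2c : Integrable (fun τ : ℝ => g2 ((τ - t)/ω)) :=
    (hg2i.comp_div (ne_of_gt hω)).comp_sub_right t
  have hg3c : Integrable (fun τ : ℝ => g3 ((τ - t)/ω)) :=
    (hg3i.comp_div (ne_of_gt hω)).comp_sub_right t
  have hcv2 : ∫ τ : ℝ, g2 ((τ - t)/ω) = ω * ∫ y, g2 y := by
    have e1 : ∫ τ : ℝ, g2 ((τ - t)/ω) = ∫ τ : ℝ, g2 (τ/ω) :=
      integral_sub_right_eq_self (fun x => g2 (x/ω)) t
    rw [e1, MeasureTheory.Measure.integral_comp_div (fun y => g2 y) ω,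
      abs_of_pos hω, smul_eq_mul]
  have hcv3 : ∫ τ : ℝ, g3 ((τ - t)/ω) = ω * ∫ y, g3 y := by
    have e1 : ∫ τ : ℝ, g3 ((τ - t)/ω) = ∫ τ : ℝ, g3 (τ/ω) :=
      integral_sub_right_eq_self (fun x => g3 (x/ω)) t
    rw [e1, MeasureTheory.Measure.integral_comp_div (fun y => g3 y) ω,
      abs_of_pos hω, smul_eq_mul]
  -- pointwise values of the bound functions
  have hg2u : ∀ τ : ℝ, g2 ((τ - t)/ω) = (|τ - t|/ω) * ‖deriv ψ ((τ - t)/ω)‖ := by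
    intro τ
    simp only [hg2def]
    rw [norm_mul, Complex.norm_real, Real.norm_eq_abs, abs_div, abs_of_pos hω]
  have hg3u : ∀ τ : ℝ, g3 ((τ - t)/ω) = ((τ - t)^2/ω^2) * ‖deriv (deriv ψ) ((τ - t)/ω)‖ := by
    intro τ
    simp only [hg3def]
    rw [norm_mul, norm_pow, Complex.norm_real, Real.norm_eq_abs, ← abs_pow, div_pow,
      abs_div, abs_of_nonneg (sq_nonneg (τ - t)), abs_of_nonneg (sq_nonneg ω)]
  have hhn : ∀ τ, ‖hh τ‖ = ω⁻¹ * ‖deriv ψ ((τ - t)/ω)‖ := by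
    intro τ
    simp only [hhdef]
    rw [norm_mul, norm_inv, Complex.norm_real, Real.norm_eq_abs, abs_of_pos hω]
  have hd'n : ∀ τ, ‖hd' τ‖ = ω⁻¹ * (ω⁻¹ * ‖deriv (deriv ψ) ((τ - t)/ω)‖) := by
    intro τ
    simp only [hd'def]
    rw [norm_mul, norm_inv, Complex.norm_real, Real.norm_eq_abs, abs_of_pos hω,
      norm_smul, Real.norm_eq_abs, abs_of_pos (by positivity : (0:ℝ) < 1/ω), one_div]
  -- the key algebraic identity
  have hkey : ∀ τ, Wd τ + R τ = NN τ * ((deriv θ τ : ℝ) : ℂ)⁻¹ := by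
    intro τ
    simp only [hWddef, hRdef, hNNdef]
    rw [aux_I_identity]
    field_simp [hane τ, hbne]
    ring
  -- pointwise bounds
  have hRhb : ∀ τ, ‖R τ * hh τ‖ ≤ ε * M' * g2 ((τ - t)/ω) := by
    intro τ
    have t1 : ‖E1 τ * (((deriv θ τ : ℝ) : ℂ)⁻¹ - ((deriv θ t : ℝ) : ℂ)⁻¹)‖
        ≤ ε * |τ - t| := by
      rw [norm_mul, hE1n, one_mul]
      have e : (((deriv θ τ : ℝ) : ℂ)⁻¹ - ((deriv θ t : ℝ) : ℂ)⁻¹)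
          = (((deriv θ τ)⁻¹ - (deriv θ t)⁻¹ : ℝ) : ℂ) := by push_cast; ring
      rw [e, Complex.norm_real, Real.norm_eq_abs]
      exact hLip τ t
    have t2 : ‖Complex.I * NN τ * ((deriv (deriv θ) τ : ℝ) : ℂ) *
        (((deriv θ τ : ℝ) : ℂ)⁻¹) ^ 2 * ((deriv θ t : ℝ) : ℂ)⁻¹‖
        ≤ ε * (M' - 1) * |τ - t| := by
      simp only [norm_mul, norm_pow, norm_inv, Complex.norm_I, Complex.norm_real,
        Real.norm_eq_abs, one_mul]
      rw [abs_of_pos (hpos τ), abs_of_pos hpt]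
      have hNb : ‖NN τ‖ ≤ (M' - 1) * deriv θ t * |τ - t| := le_trans (hNn1 τ) (hB1 τ)
      calc ‖NN τ‖ * |deriv (deriv θ) τ| * ((deriv θ τ)⁻¹) ^ 2 * (deriv θ t)⁻¹
          ≤ (((M' - 1) * deriv θ t * |τ - t|) * (ε * (deriv θ τ)^2)) *
            ((deriv θ τ)⁻¹) ^ 2 * (deriv θ t)⁻¹ := by
            apply mul_le_mul_of_nonneg_right _ (inv_nonneg.mpr hpt.le)
            apply mul_le_mul_of_nonneg_right _ (by positivity)
            exact mul_le_mul hNb (hqb τ) (abs_nonneg _)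
              (mul_nonneg (mul_nonneg (by linarith) hpt.le) (abs_nonneg _))
        _ = ε * (M' - 1) * |τ - t| := by
            field_simp [ne_of_gt (hpos τ), ne_of_gt hpt]
    have hRn : ‖R τ‖ ≤ ε * M' * |τ - t| := by
      simp only [hRdef]
      calc ‖E1 τ * (((deriv θ τ : ℝ) : ℂ)⁻¹ - ((deriv θ t : ℝ) : ℂ)⁻¹)
            + Complex.I * NN τ * ((deriv (deriv θ) τ : ℝ) : ℂ) *
              (((deriv θ τ : ℝ) : ℂ)⁻¹) ^ 2 * ((deriv θ t : ℝ) : ℂ)⁻¹‖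
          ≤ ε * |τ - t| + ε * (M' - 1) * |τ - t| := le_trans (norm_add_le _ _) (add_le_add t1 t2)
        _ = ε * M' * |τ - t| := by ring
    rw [norm_mul, hhn τ, hg2u τ]
    calc ‖R τ‖ * (ω⁻¹ * ‖deriv ψ ((τ - t)/ω)‖)
        ≤ (ε * M' * |τ - t|) * (ω⁻¹ * ‖deriv ψ ((τ - t)/ω)‖) := by
          apply mul_le_mul_of_nonneg_right hRn (by positivity)
      _ = ε * M' * (|τ - t|/ω * ‖deriv ψ ((τ - t)/ω)‖) := by ring
  have hWh'b : ∀ τ, ‖W τ * hd' τ‖ ≤ ε * M' * g3 ((τ - t)/ω) := by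
    intro τ
    have hWn : ‖W τ‖ ≤ ε * M' * (τ - t)^2 := by
      simp only [hWdef]
      simp only [norm_mul, norm_inv, Complex.norm_I, Complex.norm_real,
        Real.norm_eq_abs, one_mul]
      rw [abs_of_pos (hpos τ), abs_of_pos hpt]
      have hNb : ‖NN τ‖ ≤ ε * M' * deriv θ τ * deriv θ t * (τ - t)^2 :=
        le_trans (hNn1 τ) (hB2 τ)
      calc ‖NN τ‖ * (deriv θ τ)⁻¹ * (deriv θ t)⁻¹
          ≤ (ε * M' * deriv θ τ * deriv θ t * (τ - t)^2) * (deriv θ τ)⁻¹ * (deriv θ t)⁻¹ := by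
            apply mul_le_mul_of_nonneg_right _ (inv_nonneg.mpr hpt.le)
            exact mul_le_mul_of_nonneg_right hNb (inv_nonneg.mpr (hpos τ).le)
        _ = ε * M' * (τ - t)^2 := by
            field_simp [ne_of_gt (hpos τ), ne_of_gt hpt]
    rw [norm_mul, hd'n τ, hg3u τ]
    calc ‖W τ‖ * (ω⁻¹ * (ω⁻¹ * ‖deriv (deriv ψ) ((τ - t)/ω)‖))
        ≤ (ε * M' * (τ - t)^2) * (ω⁻¹ * (ω⁻¹ * ‖deriv (deriv ψ) ((τ - t)/ω)‖)) := by
          apply mul_le_mul_of_nonneg_right hWn (by positivity)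
      _ = ε * M' * ((τ - t)^2/ω^2 * ‖deriv (deriv ψ) ((τ - t)/ω)‖) := by
          field_simp [ne_of_gt hω]
  have hFb : ∀ τ, ‖Wd τ * hh τ + R τ * hh τ‖
      ≤ ((M' - 1) * deriv θ t / c) * g2 ((τ - t)/ω) := by
    intro τ
    have e : Wd τ * hh τ + R τ * hh τ = NN τ * ((deriv θ τ : ℝ) : ℂ)⁻¹ * hh τ := by
      rw [← add_mul, hkey τ]
    rw [e, norm_mul, norm_mul, norm_inv, Complex.norm_real, Real.norm_eq_abs,
      abs_of_pos (hpos τ), hhn τ, hg2u τ]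
    have hNb : ‖NN τ‖ ≤ (M' - 1) * deriv θ t * |τ - t| := le_trans (hNn1 τ) (hB1 τ)
    have hinvle : (deriv θ τ)⁻¹ ≤ c⁻¹ := inv_anti₀ hc0 (hcle τ)
    calc ‖NN τ‖ * (deriv θ τ)⁻¹ * (ω⁻¹ * ‖deriv ψ ((τ - t)/ω)‖)
        ≤ (((M' - 1) * deriv θ t * |τ - t|) * c⁻¹) * (ω⁻¹ * ‖deriv ψ ((τ - t)/ω)‖) := by
          apply mul_le_mul_of_nonneg_right _ (by positivity)
          exact mul_le_mul hNb hinvle (inv_nonneg.mpr (hpos τ).le)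
            (mul_nonneg (mul_nonneg (by linarith) hpt.le) (abs_nonneg _))
      _ = ((M' - 1) * deriv θ t / c) * (|τ - t|/ω * ‖deriv ψ ((τ - t)/ω)‖) := by
          field_simp [ne_of_gt hc0, ne_of_gt hω]
  -- integrability
  have hFint : Integrable (fun τ => Wd τ * hh τ + R τ * hh τ) :=
    Integrable.mono' (hg2c.const_mul ((M' - 1) * deriv θ t / c))
      (((hcWd.mul hchh).add (hcR.mul hchh)).aestronglyMeasurable) (ae_of_all _ hFb)
  have hRhint : Integrable (fun τ => R τ * hh τ) :=
    Integrable.mono' (hg2c.const_mul (ε * M'))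
      ((hcR.mul hchh).aestronglyMeasurable) (ae_of_all _ hRhb)
  have hWh'int : Integrable (fun τ => W τ * hd' τ) :=
    Integrable.mono' (hg3c.const_mul (ε * M'))
      ((hcW.mul hchd').aestronglyMeasurable) (ae_of_all _ hWh'b)
  have hGint : Integrable (fun τ => Wd τ * hh τ + W τ * hd' τ) := by
    have e : (fun τ => Wd τ * hh τ + W τ * hd' τ)
        = fun τ => ((Wd τ * hh τ + R τ * hh τ) - R τ * hh τ) + W τ * hd' τ := by
      funext τ; ring
    rw [e]
    exact (hFint.sub hRhint).add hWh'int
  -- limits at infinity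
  have hψ'top : Tendsto (deriv ψ) atTop (𝓝 0) := aux_deriv_tendsto_zero hψd hψ''cont hI2 hI3
  have hψ'bot : Tendsto (deriv ψ) atBot (𝓝 0) := aux_deriv_tendsto_zero_bot hψd hψ''cont hI2 hI3
  have hutop : Tendsto (fun τ : ℝ => (τ - t)/ω) atTop atTop := by
    apply Tendsto.atTop_div_const hω
    exact (tendsto_atTop_add_const_right atTop (-t) tendsto_id).congr
      (fun x => by simp [sub_eq_add_neg])
  have hubot : Tendsto (fun τ : ℝ => (τ - t)/ω) atBot atBot := by
    apply Tendsto.atBot_div_const hω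
    exact (tendsto_atBot_add_const_right atBot (-t) tendsto_id).congr
      (fun x => by simp [sub_eq_add_neg])
  have hWb2 : ∀ τ, ‖W τ * hh τ‖
      ≤ (2 * c⁻¹ * (deriv θ t)⁻¹ * ω⁻¹) * ‖deriv ψ ((τ - t)/ω)‖ := by
    intro τ
    have hWn2 : ‖W τ‖ ≤ 2 * c⁻¹ * (deriv θ t)⁻¹ := by
      simp only [hWdef]
      simp only [norm_mul, norm_inv, Complex.norm_I, Complex.norm_real,
        Real.norm_eq_abs, one_mul]
      rw [abs_of_pos (hpos τ), abs_of_pos hpt]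
      apply mul_le_mul_of_nonneg_right _ (inv_nonneg.mpr hpt.le)
      exact mul_le_mul (hNn2 τ) (inv_anti₀ hc0 (hcle τ))
        (inv_nonneg.mpr (hpos τ).le) (by norm_num)
    rw [norm_mul, hhn τ]
    calc ‖W τ‖ * (ω⁻¹ * ‖deriv ψ ((τ - t)/ω)‖)
        ≤ (2 * c⁻¹ * (deriv θ t)⁻¹) * (ω⁻¹ * ‖deriv ψ ((τ - t)/ω)‖) := by
          apply mul_le_mul_of_nonneg_right hWn2 (by positivity)
      _ = (2 * c⁻¹ * (deriv θ t)⁻¹ * ω⁻¹) * ‖deriv ψ ((τ - t)/ω)‖ := by ring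
  have hPtop : Tendsto (fun τ => W τ * hh τ) atTop (𝓝 0) := by
    apply squeeze_zero_norm hWb2
    have h0 : Tendsto (fun τ : ℝ => deriv ψ ((τ - t)/ω)) atTop (𝓝 0) := hψ'top.comp hutop
    have h1 := h0.norm.const_mul (2 * c⁻¹ * (deriv θ t)⁻¹ * ω⁻¹)
    simpa using h1
  have hPbot : Tendsto (fun τ => W τ * hh τ) atBot (𝓝 0) := by
    apply squeeze_zero_norm hWb2
    have h0 : Tendsto (fun τ : ℝ => deriv ψ ((τ - t)/ω)) atBot (𝓝 0) := hψ'bot.comp hubot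
    have h1 := h0.norm.const_mul (2 * c⁻¹ * (deriv θ t)⁻¹ * ω⁻¹)
    simpa using h1
  have hint0 : ∫ τ, (Wd τ * hh τ + W τ * hd' τ) = 0 :=
    aux_integral_deriv_eq_zero (fun τ => (hWderiv τ).mul (hhderiv τ)) hGint hPbot hPtop
  -- rewrite the integrand
  have hFeq : ∀ τ : ℝ, ((deriv θ τ : ℝ) : ℂ)⁻¹ *
      (1 - Complex.exp (Complex.I * ((θ τ - θ t - deriv θ t * (τ - t) : ℝ) : ℂ))) *
      ((ω : ℝ) : ℂ)⁻¹ * deriv ψ ((τ - t) / ω) *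
      Complex.exp (-(Complex.I * (θ τ : ℂ)))
      = Wd τ * hh τ + R τ * hh τ := by
    intro τ
    have hfold : θ τ - θ t - deriv θ t * (τ - t) = Δ τ := rfl
    have hE1fold : Complex.exp (-(Complex.I * ((θ τ : ℝ) : ℂ))) = E1 τ := rfl
    rw [hfold, hE1fold]
    have e2 : Wd τ * hh τ + R τ * hh τ = NN τ * ((deriv θ τ : ℝ) : ℂ)⁻¹ * hh τ := by
      rw [← add_mul, hkey τ]
    rw [e2, ← hNneq τ]
    simp only [hhdef]
    ring
  have hIeq : (∫ τ : ℝ, ((deriv θ τ : ℝ) : ℂ)⁻¹ *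
      (1 - Complex.exp (Complex.I * ((θ τ - θ t - deriv θ t * (τ - t) : ℝ) : ℂ))) *
      ((ω : ℝ) : ℂ)⁻¹ * deriv ψ ((τ - t) / ω) *
      Complex.exp (-(Complex.I * (θ τ : ℂ))))
      = ∫ τ, (R τ * hh τ - W τ * hd' τ) := by
    rw [integral_congr_ae (ae_of_all _ hFeq)]
    calc ∫ τ, (Wd τ * hh τ + R τ * hh τ)
        = ∫ τ, ((Wd τ * hh τ + W τ * hd' τ) + (R τ * hh τ - W τ * hd' τ)) :=
          integral_congr_ae (ae_of_all _ fun τ => by ring)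
      _ = (∫ τ, (Wd τ * hh τ + W τ * hd' τ)) + ∫ τ, (R τ * hh τ - W τ * hd' τ) :=
          integral_add hGint (hRhint.sub hWh'int)
      _ = ∫ τ, (R τ * hh τ - W τ * hd' τ) := by rw [hint0, zero_add]
  rw [hIeq]
  -- final estimate
  have hptw : ∀ τ, ‖R τ * hh τ - W τ * hd' τ‖
      ≤ ε * M' * g2 ((τ - t)/ω) + ε * M' * g3 ((τ - t)/ω) :=
    fun τ => le_trans (norm_sub_le _ _) (add_le_add (hRhb τ) (hWh'b τ))
  have hbint : Integrable (fun τ => ε * M' * g2 ((τ - t)/ω) + ε * M' * g3 ((τ - t)/ω)) :=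
    (hg2c.const_mul _).add (hg3c.const_mul _)
  calc ‖∫ τ, (R τ * hh τ - W τ * hd' τ)‖
      ≤ ∫ τ, (ε * M' * g2 ((τ - t)/ω) + ε * M' * g3 ((τ - t)/ω)) :=
        norm_integral_le_of_norm_le hbint (ae_of_all _ hptw)
    _ = ε * M' * (ω * ∫ y, g2 y) + ε * M' * (ω * ∫ y, g3 y) := by
        rw [integral_add (hg2c.const_mul _) (hg3c.const_mul _), integral_const_mul,
          integral_const_mul, hcv2, hcv3]
    _ ≤ M' * ω * ((∫ τ, g2 τ) + (∫ τ, g3 τ)) * ε := le_of_eq (by ring)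
end

section
/- Let θ', θ₁', …, θ_M' be positive continuous functions on [0,1] with θ_k'(t) ≥ d θ_{k−1}'(t) for all t and k = 2,…,M, where d > M'² and max_{t∈[0,1]} g(t) / min_{t∈[0,1]} g(t) ≤ M' for each g ∈ {θ', θ₁', …, θ_M'}. Set α = √d / M', define α_k = max_{t∈[0,1]} θ'(t)/θ_k'(t) for k = 1, α_k = max_{t∈[0,1]} θ_k'(t)/θ'(t) for k = M, and α_k = max of these two quantities for 1 < k < M, and let k₀ be an index achieving min_k α_k. Then: (1) if k₀ > 1, θ'(t)/θ_{k₀−1}'(t) ≥ α for all t ∈ [0,1]; and (2) if k₀ < M, θ_{k₀+1}'(t)/θ'(t) ≥ α for all t ∈ [0,1]. -/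
open Real

/-- Let `F = θ'` and `G k = θ_k'` be positive continuous frequencies
on `[0,1]` with `G k ≥ d · G (k-1)`, `d > M'²`, and `max/min ≤ M'` on `[0,1]` for each
of them.  With `α = √d / M'` and `A k = α_k` (the maxima over `[0,1]` of `F/G 1` for
`k = 1`, of `G M / F` for `k = M`, and of `max (F/G k) (G k/F)` for `1 < k < M`), and
`k₀` an index achieving the minimum of `A`, one has: (1) if `k₀ > 1` then
`F/G (k₀−1) ≥ α` on `[0,1]`; (2) if `k₀ < M` then `G (k₀+1)/F ≥ α` on `[0,1]`. -/
theorem candidate_frequency_gap (d M' : ℝ) (M : ℕ) (F : ℝ → ℝ) (G : ℕ → ℝ → ℝ)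
    (A : ℕ → ℝ) (k₀ : ℕ)
    (hM : 1 ≤ M) (hd : M' ^ 2 < d) (hM' : 1 ≤ M')
    (hFcont : ContinuousOn F (Set.Icc 0 1))
    (hFpos : ∀ t ∈ Set.Icc (0:ℝ) 1, 0 < F t)
    (hGcont : ∀ k ∈ Finset.Icc 1 M, ContinuousOn (G k) (Set.Icc 0 1))
    (hGpos : ∀ k ∈ Finset.Icc 1 M, ∀ t ∈ Set.Icc (0:ℝ) 1, 0 < G k t)
    (hsep : ∀ k, 2 ≤ k → k ≤ M → ∀ t ∈ Set.Icc (0:ℝ) 1, d * G (k - 1) t ≤ G k t)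
    (hFratio : ∀ s ∈ Set.Icc (0:ℝ) 1, ∀ t ∈ Set.Icc (0:ℝ) 1, F s ≤ M' * F t)
    (hGratio : ∀ k ∈ Finset.Icc 1 M, ∀ s ∈ Set.Icc (0:ℝ) 1, ∀ t ∈ Set.Icc (0:ℝ) 1,
      G k s ≤ M' * G k t)
    (hA1 : IsGreatest ((fun t => F t / G 1 t) '' Set.Icc (0:ℝ) 1) (A 1))
    (hAM : 1 < M → IsGreatest ((fun t => G M t / F t) '' Set.Icc (0:ℝ) 1) (A M))
    (hAmid : ∀ k, 1 < k → k < M →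
      IsGreatest ((fun t => max (F t / G k t) (G k t / F t)) '' Set.Icc (0:ℝ) 1) (A k))
    (hk₀mem : k₀ ∈ Finset.Icc 1 M)
    (hk₀min : ∀ k ∈ Finset.Icc 1 M, A k₀ ≤ A k) :
    (1 < k₀ → ∀ t ∈ Set.Icc (0:ℝ) 1, Real.sqrt d / M' ≤ F t / G (k₀ - 1) t) ∧
      (k₀ < M → ∀ t ∈ Set.Icc (0:ℝ) 1, Real.sqrt d / M' ≤ G (k₀ + 1) t / F t) := by

  obtain ⟨hk₀1, hk₀M⟩ := Finset.mem_Icc.mp hk₀mem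
  have hM'pos : (0:ℝ) < M' := lt_of_lt_of_le one_pos hM'
  have hd1 : (1:ℝ) < d := lt_of_le_of_lt (by nlinarith) hd
  have hdpos : (0:ℝ) < d := by linarith
  set s := Real.sqrt d with hsdef
  have hs2 : s ^ 2 = d := Real.sq_sqrt hdpos.le
  have hspos : (0:ℝ) < s := Real.sqrt_pos.mpr hdpos
  have hsM' : M' < s := by
    rw [hsdef]
    exact (Real.lt_sqrt hM'pos.le).mpr hd
  -- upper bounds of A k₀ by the two ratios
  have hAk₀_F : k₀ < M → ∀ u ∈ Set.Icc (0:ℝ) 1, F u / G k₀ u ≤ A k₀ := by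
    intro hlt u hu
    rcases eq_or_lt_of_le hk₀1 with h1 | h1
    · subst h1
      exact hA1.2 ⟨u, hu, rfl⟩
    · exact le_trans (le_max_left _ _) ((hAmid k₀ h1 hlt).2 ⟨u, hu, rfl⟩)
  have hAk₀_G : 1 < k₀ → ∀ u ∈ Set.Icc (0:ℝ) 1, G k₀ u / F u ≤ A k₀ := by
    intro hgt u hu
    rcases eq_or_lt_of_le hk₀M with h1 | h1
    · subst h1
      exact (hAM hgt).2 ⟨u, hu, rfl⟩
    · exact le_trans (le_max_right _ _) ((hAmid k₀ hgt h1).2 ⟨u, hu, rfl⟩)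
  constructor
  · -- Part 1
    intro hk t ht
    by_contra hcon
    push_neg at hcon
    have hk2 : 2 ≤ k₀ := hk
    have hkm1 : k₀ - 1 ∈ Finset.Icc 1 M :=
      Finset.mem_Icc.mpr ⟨Nat.le_sub_one_of_lt hk, le_trans (Nat.sub_le _ _) hk₀M⟩
    have hFt := hFpos t ht
    have hGt := hGpos _ hkm1 t ht
    have hsep' := hsep k₀ hk2 hk₀M
    have h1 : M' * F t < s * G (k₀ - 1) t := by
      rw [div_lt_div_iff₀ hGt hM'pos] at hcon
      linarith
    have h2 : M' * s < G k₀ t / F t := by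
      rw [lt_div_iff₀ hFt]
      nlinarith [mul_lt_mul_of_pos_left h1 hspos, hsep' t ht, hGt]
    have hAk₀_lb : M' * s < A k₀ := lt_of_lt_of_le h2 (hAk₀_G hk t ht)
    have hAk₀pos : (0:ℝ) < A k₀ := lt_trans (by positivity) hAk₀_lb
    have hFsup : ∀ u ∈ Set.Icc (0:ℝ) 1, F u / G (k₀ - 1) u < A k₀ := by
      intro u hu
      have hGu := hGpos _ hkm1 u hu
      have hFu := hFpos u hu
      have h3 : F u ≤ M' * F t := hFratio u hu t ht
      have h4 : G (k₀ - 1) t ≤ M' * G (k₀ - 1) u := hGratio _ hkm1 t ht u hu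
      have hlt : F u / G (k₀ - 1) u < M' * s := by
        rw [div_lt_iff₀ hGu]
        nlinarith [mul_le_mul_of_nonneg_left h4 hspos.le]
      linarith
    have hGsup : ∀ u ∈ Set.Icc (0:ℝ) 1, G (k₀ - 1) u / F u < A k₀ := by
      intro u hu
      have hFu := hFpos u hu
      have h5 : d * G (k₀ - 1) u ≤ G k₀ u := hsep' u hu
      have h6 : G k₀ u / F u ≤ A k₀ := hAk₀_G hk u hu
      rw [div_le_iff₀ hFu] at h6
      rw [div_lt_iff₀ hFu]
      nlinarith [hGpos _ hkm1 u hu]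
    have hltA : A (k₀ - 1) < A k₀ := by
      rcases eq_or_lt_of_le (Finset.mem_Icc.mp hkm1).1 with h1' | h1'
      · obtain ⟨u, hu, hue⟩ := hA1.1
        have := hFsup u hu
        rw [← h1'] at this
        rw [← h1', ← hue]
        exact this
      · have hltM : k₀ - 1 < M := lt_of_lt_of_le (Nat.sub_lt (by omega) one_pos) hk₀M
        obtain ⟨u, hu, hue⟩ := (hAmid (k₀ - 1) h1' hltM).1
        rw [← hue]
        exact max_lt (hFsup u hu) (hGsup u hu)
    exact absurd (hk₀min (k₀ - 1) hkm1) (not_le.mpr hltA)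
  · -- Part 2
    intro hk t ht
    by_contra hcon
    push_neg at hcon
    have hkp1 : k₀ + 1 ∈ Finset.Icc 1 M := Finset.mem_Icc.mpr ⟨by omega, hk⟩
    have hFt := hFpos t ht
    have hGt := hGpos _ hkp1 t ht
    have hGk₀t := hGpos _ hk₀mem t ht
    have hsep' : ∀ u ∈ Set.Icc (0:ℝ) 1, d * G k₀ u ≤ G (k₀ + 1) u := by
      intro u hu
      have := hsep (k₀ + 1) (by omega) hk u hu
      simpa using this
    have h1 : M' * G (k₀ + 1) t < s * F t := by
      rw [div_lt_div_iff₀ hFt hM'pos] at hcon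
      linarith
    have h2 : M' * s < F t / G k₀ t := by
      rw [lt_div_iff₀ hGk₀t]
      have h2a : s * (M' * s * G k₀ t) < s * F t := by
        have heq : s * (M' * s * G k₀ t) = M' * (d * G k₀ t) := by
          rw [← hs2]; ring
        rw [heq]
        nlinarith [mul_le_mul_of_nonneg_left (hsep' t ht) hM'pos.le]
      nlinarith [h2a]
    have hAk₀_lb : M' * s < A k₀ := lt_of_lt_of_le h2 (hAk₀_F hk t ht)
    have hAk₀pos : (0:ℝ) < A k₀ := lt_trans (by positivity) hAk₀_lb
    have hGsup : ∀ u ∈ Set.Icc (0:ℝ) 1, G (k₀ + 1) u / F u < A k₀ := by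
      intro u hu
      have hGu := hGpos _ hkp1 u hu
      have hFu := hFpos u hu
      have h3 : G (k₀ + 1) u ≤ M' * G (k₀ + 1) t := hGratio _ hkp1 u hu t ht
      have h4 : F t ≤ M' * F u := hFratio t ht u hu
      have hlt : G (k₀ + 1) u / F u < M' * s := by
        rw [div_lt_iff₀ hFu]
        nlinarith [mul_le_mul_of_nonneg_left h4 hspos.le]
      linarith
    have hFsup : ∀ u ∈ Set.Icc (0:ℝ) 1, F u / G (k₀ + 1) u < A k₀ := by
      intro u hu
      have hFu := hFpos u hu
      have hGu := hGpos _ hkp1 u hu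
      have h5 : d * G k₀ u ≤ G (k₀ + 1) u := hsep' u hu
      have h6 : F u / G k₀ u ≤ A k₀ := hAk₀_F hk u hu
      rw [div_le_iff₀ (hGpos _ hk₀mem u hu)] at h6
      rw [div_lt_iff₀ hGu]
      nlinarith [hGpos _ hk₀mem u hu]
    have hltA : A (k₀ + 1) < A k₀ := by
      rcases eq_or_lt_of_le (Finset.mem_Icc.mp hkp1).2 with h1' | h1'
      · have hM1 : 1 < M := by omega
        obtain ⟨u, hu, hue⟩ := (hAM hM1).1
        have := hGsup u hu
        rw [h1'] at this
        rw [h1', ← hue]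
        exact this
      · obtain ⟨u, hu, hue⟩ := (hAmid (k₀ + 1) (by omega) h1').1
        rw [← hue]
        exact max_lt (hFsup u hu) (hGsup u hu)
    exact absurd (hk₀min (k₀ + 1) hkp1) (not_le.mpr hltA)
end
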